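/- arXiv:0706.3740 — 8 statements merged into one kernel-verified Lean document; each statement's English description precedes it below -/
import Mathlib

section
/- If φ : [0,∞) → ℝ is strictly convex and increasing, r is a symmetric random variable with ‖r‖_∞ = 1 (and r is not almost surely 0), and a, b are real numbers with b ≠ 0, then E[φ(|a + r b|)] > φ(|a|). -/
/-!
Since `r` is symmetric, `E[ψ (a + r b)] = E[(ψ (a + r b) + ψ (a - r b)) / 2]` for `ψ x = φ |x|`.
A strictly convex function increasing on `[0, ∞)` composed with `|·|` is strictly convex on all
of `ℝ`, so the integrand exceeds `ψ a` wherever `r b ≠ 0`, which has positive probability.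
Boundedness of `r` makes everything integrable.
-/

open MeasureTheory Set
open scoped ENNReal NNReal

theorem StrictConvexOn.strictMonoOn_of_monotoneOn {s : Set ℝ} {φ : ℝ → ℝ}
    (hφ : StrictConvexOn ℝ s φ) (hφm : MonotoneOn φ s) : StrictMonoOn φ s := by
  intro x hx y hy hxy
  refine (hφm hx hy hxy.le).lt_of_ne fun heq => ?_
  have hmid : (1 / 2 : ℝ) • x + (1 / 2 : ℝ) • y ∈ s :=
    hφ.1 hx hy (by norm_num) (by norm_num) (by norm_num)
  have hlt := hφ.2 hx hy hxy.ne (by norm_num : (0 : ℝ) < 1 / 2) (by norm_num : (0 : ℝ) < 1 / 2)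
    (by norm_num)
  have hle := hφm hx hmid (by simp only [smul_eq_mul]; linarith)
  simp only [smul_eq_mul] at hlt hle
  linarith

theorem StrictConvexOn.comp_abs {φ : ℝ → ℝ} (hφ : StrictConvexOn ℝ (Ici 0) φ)
    (hφm : MonotoneOn φ (Ici 0)) : StrictConvexOn ℝ univ (fun x => φ |x|) := by
  refine ⟨convex_univ, fun x _ y _ hxy a b ha hb hab => ?_⟩
  simp only [smul_eq_mul]
  have habs : |a * x + b * y| ≤ a * |x| + b * |y| := by
    simpa [abs_mul, abs_of_pos ha, abs_of_pos hb] using abs_add_le (a * x) (b * y)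
  have hmem : a * |x| + b * |y| ∈ Ici (0 : ℝ) := mem_Ici.2 (by positivity)
  by_cases hxy' : |x| = |y|
  · -- `x ≠ y` with `|x| = |y|` forces `y = -x ≠ 0`, so `|a x + b y| = |a - b| |x| < |x|`
    have hy : y = -x := by linarith [(abs_eq_abs.1 hxy').resolve_left hxy]
    have hx : x ≠ 0 := fun h => hxy (by simp [hy, h])
    have hlt : |a * x + b * y| < a * |x| + b * |y| := by
      rw [hy, abs_neg, show a * x + b * -x = (a - b) * x by ring, abs_mul, ← add_mul]
      exact mul_lt_mul_of_pos_right (abs_sub_lt_iff.2 ⟨by linarith, by linarith⟩) (abs_pos.2 hx)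
    calc φ |a * x + b * y| < φ (a * |x| + b * |y|) :=
          hφ.strictMonoOn_of_monotoneOn hφm (mem_Ici.2 (abs_nonneg _)) hmem hlt
      _ = a * φ |x| + b * φ |y| := by rw [← hxy', ← add_mul, hab, one_mul, ← add_mul, hab, one_mul]
  · calc φ |a * x + b * y| ≤ φ (a * |x| + b * |y|) :=
          hφm (mem_Ici.2 (abs_nonneg _)) hmem habs
      _ < a * φ |x| + b * φ |y| := by
          simpa only [smul_eq_mul] using
            hφ.2 (mem_Ici.2 (abs_nonneg x)) (mem_Ici.2 (abs_nonneg y)) hxy' ha hb hab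

theorem StrictConvexOn.lt_avg_add_sub {ψ : ℝ → ℝ} (hψ : StrictConvexOn ℝ univ ψ) (a : ℝ)
    {x : ℝ} (hx : x ≠ 0) : ψ a < (ψ (a + x) + ψ (a - x)) / 2 := by
  have hne : a + x ≠ a - x := fun h => hx (by linarith)
  have := hψ.2 (mem_univ _) (mem_univ _) hne (by norm_num : (0 : ℝ) < 1 / 2)
    (by norm_num : (0 : ℝ) < 1 / 2) (by norm_num)
  simp only [smul_eq_mul] at this
  rw [show (1 / 2 : ℝ) * (a + x) + 1 / 2 * (a - x) = a by ring] at this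
  linarith

theorem ConvexOn.continuous_of_univ {E : Type*} [NormedAddCommGroup E] [NormedSpace ℝ E]
    [FiniteDimensional ℝ E] {f : E → ℝ} (hf : ConvexOn ℝ univ f) : Continuous f :=
  continuousOn_univ.1 (hf.continuousOn isOpen_univ)

section Probability

variable {Ω : Type*} [MeasurableSpace Ω] {P : Measure Ω}

theorem ae_norm_le_of_eLpNorm_top_le {E : Type*} [NormedAddCommGroup E] {f : Ω → E} {C : ℝ≥0}
    (h : eLpNorm f ∞ P ≤ C) : ∀ᵐ ω ∂P, ‖f ω‖ ≤ C := by
  rw [eLpNorm_exponent_top] at h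
  filter_upwards [ae_le_eLpNormEssSup (f := f) (μ := P)] with ω hω
  exact_mod_cast (enorm_eq_nnnorm (f ω) ▸ hω.trans h : (‖f ω‖₊ : ℝ≥0∞) ≤ C)

theorem Continuous.integrable_comp_of_ae_norm_le [IsFiniteMeasure P] {E F : Type*}
    [NormedAddCommGroup E] [ProperSpace E] [NormedAddCommGroup F] {g : E → F} (hg : Continuous g)
    {Y : Ω → E} (hY : AEStronglyMeasurable Y P) {C : ℝ} (hC : ∀ᵐ ω ∂P, ‖Y ω‖ ≤ C) :
    Integrable (fun ω => g (Y ω)) P := by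
  obtain ⟨M, hM⟩ := (isCompact_closedBall (0 : E) C).exists_bound_of_continuousOn hg.continuousOn
  exact .of_bound (hg.comp_aestronglyMeasurable hY) M
    (hC.mono fun ω hω => hM _ (mem_closedBall_zero_iff.2 hω))

variable {X : Ω → ℝ}

theorem integral_comp_neg_of_map_eq {E : Type*} [NormedAddCommGroup E] [NormedSpace ℝ E]
    (hX : Measurable X) (hsymm : P.map X = P.map (fun ω => -X ω)) {f : ℝ → E}
    (hf : StronglyMeasurable f) : ∫ ω, f (X ω) ∂P = ∫ ω, f (-X ω) ∂P := by
  have hnegX : Measurable fun ω => -X ω := hX.neg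
  rw [← integral_map hX.aemeasurable hf.aestronglyMeasurable, hsymm,
    integral_map hnegX.aemeasurable hf.aestronglyMeasurable]

theorem MeasureTheory.Integrable.comp_neg_of_map_eq {E : Type*} [NormedAddCommGroup E]
    (hX : Measurable X) (hsymm : P.map X = P.map (fun ω => -X ω)) {f : ℝ → E}
    (hf : StronglyMeasurable f) (hint : Integrable (fun ω => f (X ω)) P) :
    Integrable (fun ω => f (-X ω)) P := by
  have hnegX : Measurable fun ω => -X ω := hX.neg
  have h := (integrable_map_measure hf.aestronglyMeasurable hX.aemeasurable).2 hint
  rw [hsymm] at h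
  exact (integrable_map_measure hf.aestronglyMeasurable hnegX.aemeasurable).1 h

theorem map_mul_const_eq_map_neg_of_map_eq (hX : Measurable X)
    (hsymm : P.map X = P.map (fun ω => -X ω)) (b : ℝ) :
    P.map (fun ω => X ω * b) = P.map (fun ω => -(X ω * b)) := by
  have hmul : Measurable (· * b) := measurable_mul_const b
  have hnegX : Measurable fun ω => -X ω := hX.neg
  calc P.map (fun ω => X ω * b) = (P.map X).map (· * b) := (Measure.map_map hmul hX).symm
    _ = (P.map (fun ω => -X ω)).map (· * b) := by rw [hsymm]
    _ = P.map (fun ω => -(X ω * b)) := by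
      rw [Measure.map_map hmul hnegX, Function.comp_def]
      simp only [neg_mul]

theorem StrictConvexOn.lt_integral_comp_add_of_map_eq [IsProbabilityMeasure P] {ψ : ℝ → ℝ}
    (hψ : StrictConvexOn ℝ univ ψ) (hX : Measurable X) (hsymm : P.map X = P.map (fun ω => -X ω))
    (hX0 : ¬ X =ᵐ[P] 0) (a : ℝ) (hint : Integrable (fun ω => ψ (a + X ω)) P) :
    ψ a < ∫ ω, ψ (a + X ω) ∂P := by
  have hf : StronglyMeasurable fun t => ψ (a + t) :=
    (hψ.convexOn.continuous_of_univ.comp (continuous_const.add continuous_id)).stronglyMeasurable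
  have hint' : Integrable (fun ω => ψ (a - X ω)) P := by
    simpa only [← sub_eq_add_neg] using hint.comp_neg_of_map_eq hX hsymm hf
  have hsym : ∫ ω, ψ (a + X ω) ∂P = ∫ ω, ψ (a - X ω) ∂P := by
    simpa only [← sub_eq_add_neg] using integral_comp_neg_of_map_eq hX hsymm hf
  have hlt : ∀ ω, X ω ≠ 0 → ψ a < (ψ (a + X ω) + ψ (a - X ω)) / 2 :=
    fun ω hω => hψ.lt_avg_add_sub a hω
  have hle : ∀ ω, ψ a ≤ (ψ (a + X ω) + ψ (a - X ω)) / 2 := fun ω => by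
    by_cases hω : X ω = 0
    · simp [hω]
    · exact (hlt ω hω).le
  have havg : Integrable (fun ω => (ψ (a + X ω) + ψ (a - X ω)) / 2) P :=
    (hint.add hint').div_const 2
  have hgap : 0 < ∫ ω, ((ψ (a + X ω) + ψ (a - X ω)) / 2 - ψ a) ∂P := by
    refine (integral_pos_iff_support_of_nonneg (fun ω => sub_nonneg.2 (hle ω))
      (havg.sub (integrable_const _))).2 ?_
    have hX0' : P {ω | X ω ≠ 0} ≠ 0 := fun h => hX0 (ae_iff.2 h)
    exact (pos_iff_ne_zero.2 hX0').trans_le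
      (measure_mono fun ω hω => (sub_pos.2 (hlt ω hω)).ne')
  rw [integral_sub havg (integrable_const _), integral_div, integral_add hint hint', ← hsym,
    integral_const, probReal_univ, one_smul] at hgap
  linarith

end Probability

theorem stmt3 {Ω : Type*} [MeasurableSpace Ω] (P : Measure Ω) [IsProbabilityMeasure P]
    (r : Ω → ℝ) (hmeas : Measurable r)
    (hsymm : Measure.map r P = Measure.map (fun ω => -(r ω)) P)
    (hnorm : eLpNorm r ⊤ P = 1)
    (φ : ℝ → ℝ) (hφ : StrictConvexOn ℝ (Set.Ici 0) φ) (hφm : MonotoneOn φ (Set.Ici 0))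
    (a b : ℝ) (hb : b ≠ 0) :
    φ |a| < ∫ ω, φ |a + r ω * b| ∂P := by
  have hψ := hφ.comp_abs hφm
  have hr0 : ¬ (fun ω => r ω * b) =ᵐ[P] 0 := fun h => by
    have : r =ᵐ[P] 0 := h.mono fun ω hω => (mul_eq_zero.1 hω).resolve_right hb
    rw [eLpNorm_congr_ae this, eLpNorm_zero] at hnorm
    exact zero_ne_one hnorm
  have hr1 : ∀ᵐ ω ∂P, |r ω| ≤ 1 := by
    simpa using ae_norm_le_of_eLpNorm_top_le (f := r) (C := 1) (by simp [hnorm])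
  have hbound : ∀ᵐ ω ∂P, ‖a + r ω * b‖ ≤ |a| + |b| := hr1.mono fun ω hω =>
    (abs_add_le _ _).trans (by rw [abs_mul]; nlinarith [abs_nonneg b, abs_nonneg (r ω)])
  have hint : Integrable (fun ω => φ |a + r ω * b|) P :=
    hψ.convexOn.continuous_of_univ.integrable_comp_of_ae_norm_le
      ((hmeas.mul_const b).const_add a).aestronglyMeasurable hbound
  exact hψ.lt_integral_comp_add_of_map_eq (hmeas.mul_const b)
    (map_mul_const_eq_map_neg_of_map_eq hmeas hsymm b) hr0 a hint
end

section
/- Let x_1,...,x_n be vectors in a Banach space X, φ a strictly convex increasing function on [0,∞) with φ(0)=0, and (r_i) symmetric independent random variables with ‖r_i‖_∞ = 1. If there is ρ > 0 such that sup over all signs ε_i = ±1 of ‖ε_1 x_1 + ... + ε_n x_n‖ ≥ ‖x_1‖ + ρ, then there exists δ > 0 (depending only on ρ, φ, n, the distributions of the r_i, and ‖x_1‖) such that E[φ(‖x_1 + r_2 x_2 + ... + r_n x_n‖)] ≥ φ(‖x_1‖) + δ. -/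
/-!
Put `W = ∑_{2 ≤ i ≤ n} r_i x_i`. Independence and symmetry of the `r_i` make `W` and `-W`
identically distributed, so `E φ‖x₁ + W‖` is the mean of `(φ‖x₁ + W‖ + φ‖x₁ - W‖) / 2`. As
`‖x₁ + W‖ + ‖x₁ - W‖ ≥ 2‖x₁‖`, convexity and monotonicity bound this below by `φ‖x₁‖` everywhere.
After flipping all signs so that `ε₁ = 1`, the event that each `r_i` is close to `ε_i` has
positive probability (independence, plus `‖r_i‖_∞ = 1` and symmetry for each factor), and on it
`‖x₁ + W‖ ≥ ‖x₁‖ + ρ / 2`. There a two-point Karamata argument improves the bound on the average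
by half of `φ (c + ρ/2) + φ (max (c - ρ/2) 0) - 2 φ c` (`c = ‖x₁‖`), which is positive by strict
convexity.
-/

open MeasureTheory ProbabilityTheory

section ConvexInequalities

variable {φ : ℝ → ℝ}

lemma ConvexOn.two_mul_le_add_of_two_mul_le (hφ : ConvexOn ℝ (Set.Ici 0) φ)
    (hφm : MonotoneOn φ (Set.Ici 0)) {a b c : ℝ} (ha : 0 ≤ a) (hb : 0 ≤ b) (hc : 0 ≤ c)
    (habc : 2 * c ≤ a + b) : 2 * φ c ≤ φ a + φ b := by
  have hmid := hφ.2 (Set.mem_Ici.2 ha) (Set.mem_Ici.2 hb) (by norm_num : (0 : ℝ) ≤ 1 / 2)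
    (by norm_num : (0 : ℝ) ≤ 1 / 2) (by norm_num)
  have hmono : φ c ≤ φ ((1 / 2 : ℝ) • a + (1 / 2 : ℝ) • b) :=
    hφm hc (by simp only [smul_eq_mul, Set.mem_Ici]; positivity)
      (by simp only [smul_eq_mul]; linarith)
  simp only [smul_eq_mul] at hmid hmono
  linarith

lemma StrictConvexOn.two_mul_lt_add_of_two_mul_le (hφ : StrictConvexOn ℝ (Set.Ici 0) φ)
    (hφm : MonotoneOn φ (Set.Ici 0)) {a b c : ℝ} (ha : 0 ≤ a) (hb : 0 ≤ b) (hc : 0 ≤ c)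
    (hab : a ≠ b) (habc : 2 * c ≤ a + b) : 2 * φ c < φ a + φ b := by
  have hmid := hφ.2 (Set.mem_Ici.2 ha) (Set.mem_Ici.2 hb) hab (by norm_num : (0 : ℝ) < 1 / 2)
    (by norm_num : (0 : ℝ) < 1 / 2) (by norm_num)
  have hmono : φ c ≤ φ ((1 / 2 : ℝ) • a + (1 / 2 : ℝ) • b) :=
    hφm hc (by simp only [smul_eq_mul, Set.mem_Ici]; positivity)
      (by simp only [smul_eq_mul]; linarith)
  simp only [smul_eq_mul] at hmid hmono
  linarith

-- Two-point case of Karamata's inequality.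
lemma ConvexOn.map_add_map_add_sub_le {s : Set ℝ} {f : ℝ → ℝ} (hf : ConvexOn ℝ s f)
    {a b u : ℝ} (ha : a ∈ s) (hb : b ∈ s) (hbu : b ≤ u) (hua : u ≤ a) :
    f u + f (a + b - u) ≤ f a + f b := by
  rcases (hbu.trans hua).eq_or_lt with rfl | hba
  · obtain rfl : u = b := le_antisymm hua hbu
    simp
  set θ := (u - b) / (a - b)
  have hθ0 : 0 ≤ θ := div_nonneg (by linarith) (by linarith)
  have hθ1 : θ ≤ 1 := (div_le_one (by linarith)).2 (by linarith)
  have hu : θ • a + (1 - θ) • b = u := by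
    simp only [θ, smul_eq_mul]; field_simp; ring
  have hv : (1 - θ) • a + θ • b = a + b - u := by
    simp only [θ, smul_eq_mul]; field_simp; ring
  have h₁ := hf.2 ha hb hθ0 (sub_nonneg.2 hθ1) (add_sub_cancel θ 1)
  have h₂ := hf.2 ha hb (sub_nonneg.2 hθ1) hθ0 (sub_add_cancel 1 θ)
  rw [hu] at h₁
  rw [hv] at h₂
  simp only [smul_eq_mul] at h₁ h₂
  linarith

lemma ConvexOn.map_add_add_map_max_sub_le (hφ : ConvexOn ℝ (Set.Ici 0) φ)
    (hφm : MonotoneOn φ (Set.Ici 0)) {a b c ρ : ℝ} (hb : 0 ≤ b) (hc : 0 ≤ c) (hρ : 0 ≤ ρ)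
    (hca : c + ρ ≤ a) (habc : 2 * c ≤ a + b) :
    φ (c + ρ) + φ (max (c - ρ) 0) ≤ φ a + φ b := by
  have ha : 0 ≤ a := by linarith
  rcases le_or_gt (max (c - ρ) 0) b with hb' | hb'
  · exact add_le_add (hφm (Set.mem_Ici.2 (by linarith)) ha hca)
      (hφm (Set.mem_Ici.2 (le_max_right _ _)) hb hb')
  have hb' : b < c - ρ := (lt_max_iff.1 hb').resolve_right hb.not_gt
  rw [max_eq_left (by linarith)]
  have hkar := hφ.map_add_map_add_sub_le (a := a) (b := b) ha hb hb'.le (by linarith)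
  have hmono : φ (c + ρ) ≤ φ (a + b - (c - ρ)) :=
    hφm (Set.mem_Ici.2 (by linarith)) (Set.mem_Ici.2 (by linarith)) (by linarith)
  linarith

lemma StrictConvexOn.two_mul_lt_map_add_add_map_max_sub (hφ : StrictConvexOn ℝ (Set.Ici 0) φ)
    (hφm : MonotoneOn φ (Set.Ici 0)) {c ρ : ℝ} (hc : 0 ≤ c) (hρ : 0 < ρ) :
    2 * φ c < φ (c + ρ) + φ (max (c - ρ) 0) :=
  hφ.two_mul_lt_add_of_two_mul_le hφm (by linarith) (le_max_right _ _) hc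
    (max_lt (by linarith) (by linarith)).ne' (by linarith [le_max_left (c - ρ) 0])

end ConvexInequalities

section NormedSpace

variable {X : Type*} [NormedAddCommGroup X] [NormedSpace ℝ X]

lemma two_mul_norm_le_norm_add_add_norm_sub (y w : X) : 2 * ‖y‖ ≤ ‖y + w‖ + ‖y - w‖ :=
  calc 2 * ‖y‖ = ‖(y + w) + (y - w)‖ := by
        rw [add_add_sub_cancel, ← two_smul ℝ y, norm_smul, Real.norm_two]
    _ ≤ ‖y + w‖ + ‖y - w‖ := norm_add_le _ _

lemma exists_sign_norm_sum_Icc_eq_norm_add_sum {n : ℕ} (hn : 1 ≤ n) {ε : ℕ → ℝ}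
    (hε : ∀ i, ε i = 1 ∨ ε i = -1) (x : ℕ → X) :
    ∃ ε' : ℕ → ℝ, (∀ i, ε' i = 1 ∨ ε' i = -1) ∧
      ‖∑ i ∈ Finset.Icc 1 n, ε i • x i‖ = ‖x 1 + ∑ i ∈ Finset.Icc 2 n, ε' i • x i‖ := by
  have hε1 : |ε 1| = 1 := by rcases hε 1 with h | h <;> simp [h]
  have hε11 : ε 1 * ε 1 = 1 := by rw [← abs_mul_abs_self, hε1, one_mul]
  refine ⟨fun i => ε 1 * ε i, fun i => ?_, ?_⟩
  · rcases hε 1 with h1 | h1 <;> rcases hε i with h | h <;> simp [h1, h]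
  calc ‖∑ i ∈ Finset.Icc 1 n, ε i • x i‖ = ‖ε 1 • ∑ i ∈ Finset.Icc 1 n, ε i • x i‖ := by
        rw [norm_smul, Real.norm_eq_abs, hε1, one_mul]
    _ = ‖x 1 + ∑ i ∈ Finset.Icc 2 n, (ε 1 * ε i) • x i‖ := by
        rw [Finset.smul_sum, ← Finset.insert_Icc_add_one_left_eq_Icc hn,
          Finset.sum_insert (by simp), smul_smul, hε11, one_smul]
        simp only [smul_smul]
        rfl

lemma norm_sum_smul_sub_sum_smul_le {ι : Type*} {s : Finset ι} {t ε : ι → ℝ} {η : ℝ}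
    (h : ∀ i ∈ s, |t i - ε i| ≤ η) (x : ι → X) :
    ‖∑ i ∈ s, t i • x i - ∑ i ∈ s, ε i • x i‖ ≤ η * ∑ i ∈ s, ‖x i‖ := by
  rw [← Finset.sum_sub_distrib, Finset.mul_sum]
  refine norm_sum_le_of_le _ fun i hi => ?_
  rw [← sub_smul, norm_smul, Real.norm_eq_abs]
  exact mul_le_mul_of_nonneg_right (h i hi) (norm_nonneg _)

end NormedSpace

section Symmetrization

variable {Ω X : Type*} [MeasurableSpace Ω] {P : Measure Ω} [NormedAddCommGroup X]
  [MeasurableSpace X] [BorelSpace X] {φ : ℝ → ℝ}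

lemma MonotoneOn.measurable_comp_norm (hφm : MonotoneOn φ (Set.Ici 0)) :
    Measurable fun z : X => φ ‖z‖ := by
  have hψ : Monotone fun t : ℝ => φ (max t 0) := fun s t hst =>
    hφm (Set.mem_Ici.2 (le_max_right _ _)) (Set.mem_Ici.2 (le_max_right _ _))
      (max_le_max_right 0 hst)
  have hmax : ∀ z : X, max ‖z‖ 0 = ‖z‖ := fun z => max_eq_left (norm_nonneg z)
  simpa only [Function.comp_def, hmax] using hψ.measurable.comp (measurable_norm (α := X))

theorem exists_pos_add_le_integral_of_identDistrib_neg [IsProbabilityMeasure P]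
    [NormedSpace ℝ X] (hφ : StrictConvexOn ℝ (Set.Ici 0) φ) (hφm : MonotoneOn φ (Set.Ici 0))
    {W : Ω → X} (hW : IdentDistrib W (-W) P P) {K : ℝ} (hWK : ∀ᵐ ω ∂P, ‖W ω‖ ≤ K)
    (y : X) {ρ : ℝ} (hρ : 0 < ρ) (hE : 0 < P {ω | ‖y‖ + ρ ≤ ‖y + W ω‖}) :
    ∃ δ, 0 < δ ∧ φ ‖y‖ + δ ≤ ∫ ω, φ ‖y + W ω‖ ∂P := by
  set E := {ω | ‖y‖ + ρ ≤ ‖y + W ω‖}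
  set δ₀ := (φ (‖y‖ + ρ) + φ (max (‖y‖ - ρ) 0) - 2 * φ ‖y‖) / 2 with hδ₀_def
  have hδ₀ : 0 < δ₀ := by
    have := hφ.two_mul_lt_map_add_add_map_max_sub hφm (norm_nonneg y) hρ
    linarith
  have hu : Measurable fun z : X => φ ‖y + z‖ :=
    hφm.measurable_comp_norm.comp (measurable_const_add y)
  have hsymm : IdentDistrib (fun ω => φ ‖y + W ω‖) (fun ω => φ ‖y - W ω‖) P P := by
    simpa only [Function.comp_def, Pi.neg_apply, ← sub_eq_add_neg] using hW.comp hu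
  have hf : Integrable (fun ω => φ ‖y + W ω‖) P := by
    refine .of_bound (hu.comp_aemeasurable hW.aemeasurable_fst).aestronglyMeasurable
      (max |φ 0| |φ (‖y‖ + K)|) ?_
    filter_upwards [hWK] with ω hω
    have hle : ‖y + W ω‖ ≤ ‖y‖ + K := (norm_add_le _ _).trans (add_le_add_right hω _)
    exact abs_le_max_abs_abs (hφm Set.self_mem_Ici (norm_nonneg _) (norm_nonneg _))
      (hφm (norm_nonneg _) ((norm_nonneg _).trans hle) hle)
  have hg : Integrable (fun ω => φ ‖y - W ω‖) P := hsymm.integrable_iff.1 hf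
  have hpoint : ∀ ω, φ ‖y‖ + E.indicator (fun _ => δ₀) ω ≤ (φ ‖y + W ω‖ + φ ‖y - W ω‖) / 2 := by
    intro ω
    have htri := two_mul_norm_le_norm_add_add_norm_sub y (W ω)
    by_cases hω : ω ∈ E
    · have := hφ.convexOn.map_add_add_map_max_sub_le hφm (norm_nonneg _) (norm_nonneg y)
        hρ.le hω htri
      rw [Set.indicator_of_mem hω]
      linarith
    · have := hφ.convexOn.two_mul_le_add_of_two_mul_le hφm (norm_nonneg _) (norm_nonneg _)
        (norm_nonneg y) htri
      rw [Set.indicator_of_notMem hω]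
      linarith
  have hEm : NullMeasurableSet E P := hW.aemeasurable_fst.nullMeasurable
    (measurableSet_le measurable_const (measurable_norm.comp (measurable_const_add y)))
  refine ⟨δ₀ * P.real E, mul_pos hδ₀ (ENNReal.toReal_pos hE.ne' (measure_ne_top P E)), ?_⟩
  calc φ ‖y‖ + δ₀ * P.real E = ∫ ω, φ ‖y‖ + E.indicator (fun _ => δ₀) ω ∂P := by
        rw [integral_add (integrable_const _) ((integrable_const δ₀).indicator₀ hEm),
          integral_const, integral_indicator₀ hEm, setIntegral_const]
        simp [mul_comm]
    _ ≤ ∫ ω, (φ ‖y + W ω‖ + φ ‖y - W ω‖) / 2 ∂P :=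
        integral_mono ((integrable_const _).add ((integrable_const δ₀).indicator₀ hEm))
          ((hf.add hg).div_const 2) hpoint
    _ = ∫ ω, φ ‖y + W ω‖ ∂P := by
        rw [integral_div, integral_add hf hg, ← hsymm.integral_eq]
        ring

end Symmetrization

section SymmetricBounded

variable {Ω : Type*} [MeasurableSpace Ω] {P : Measure Ω}

lemma ae_abs_le_one_of_eLpNorm_top_eq_one {r : Ω → ℝ} (hnorm : eLpNorm r ⊤ P = 1) :
    ∀ᵐ ω ∂P, |r ω| ≤ 1 := by
  filter_upwards [ae_le_eLpNormEssSup (f := r) (μ := P)] with ω hω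
  rw [← eLpNorm_exponent_top, hnorm, Real.enorm_eq_ofReal_abs, ENNReal.ofReal_le_one] at hω
  exact hω

lemma measure_abs_sub_sign_le_pos {r : Ω → ℝ} (hr : Measurable r)
    (hsymm : P.map r = P.map (fun ω => -r ω)) (hnorm : eLpNorm r ⊤ P = 1) {ε η : ℝ}
    (hε : ε = 1 ∨ ε = -1) (hη : 0 < η) : 0 < P {ω | |r ω - ε| ≤ η} := by
  set T : Set ℝ := {u | |u - 1| ≤ η}
  have hT : MeasurableSet T := measurableSet_le (by fun_prop) measurable_const
  have hflip : P ((fun ω => -r ω) ⁻¹' T) = P (r ⁻¹' T) := by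
    rw [← Measure.map_apply (f := fun ω => -r ω) hr.neg hT, ← hsymm, Measure.map_apply hr hT]
  have hpos : 0 < P (r ⁻¹' T) := by
    by_contra! h0
    have h0' : P ((fun ω => -r ω) ⁻¹' T) = 0 := by rw [hflip]; exact nonpos_iff_eq_zero.1 h0
    have hsmall : ∀ᵐ ω ∂P, ‖r ω‖ ≤ 1 - η := by
      filter_upwards [ae_abs_le_one_of_eLpNorm_top_eq_one hnorm,
        measure_eq_zero_iff_ae_notMem.1 (nonpos_iff_eq_zero.1 h0),
        measure_eq_zero_iff_ae_notMem.1 h0'] with ω h1 h2 h3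
      simp only [T, Set.mem_preimage, Set.mem_ofPred_eq, not_le] at h2 h3
      rw [abs_le] at h1
      rw [Real.norm_eq_abs, abs_le]
      constructor <;> cases abs_cases (r ω - 1) <;> cases abs_cases (-r ω - 1) <;> linarith
    have := eLpNormEssSup_le_of_ae_bound hsmall
    rw [← eLpNorm_exponent_top, hnorm, ENNReal.one_le_ofReal] at this
    linarith
  rcases hε with rfl | rfl
  · exact hpos
  · have hset : {ω | |r ω - -1| ≤ η} = (fun ω => -r ω) ⁻¹' T := by
      ext ω
      simp only [T, Set.mem_ofPred_eq, Set.mem_preimage, ← abs_neg (r ω - -1)]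
      ring_nf
    rw [hset, hflip]
    exact hpos

end SymmetricBounded

section Independence

variable {Ω ι X : Type*} [MeasurableSpace Ω] {P : Measure Ω} [NormedAddCommGroup X]
  [NormedSpace ℝ X] {r : ι → Ω → ℝ}

lemma iIndepFun.identDistrib_sum_smul_neg [Countable ι] [MeasurableSpace X] [BorelSpace X]
    (hr : ∀ i, Measurable (r i)) (hindep : iIndepFun r P)
    (hsymm : ∀ i, P.map (r i) = P.map (fun ω => -r i ω)) (s : Finset ι) (x : ι → X) :
    IdentDistrib (fun ω => ∑ i ∈ s, r i ω • x i) (-fun ω => ∑ i ∈ s, r i ω • x i) P P := by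
  have hneg : iIndepFun (fun i ω => -r i ω) P :=
    hindep.comp (fun _ => Neg.neg) (fun _ => measurable_neg)
  have hvec := IdentDistrib.pi
    (fun i => ⟨(hr i).aemeasurable, (hr i).neg.aemeasurable, hsymm i⟩) hindep hneg
  have hG : Continuous fun t : ι → ℝ => ∑ i ∈ s, t i • x i :=
    continuous_finsetSum _ fun i _ => (continuous_apply i).smul continuous_const
  have hW := hvec.comp hG.measurable
  simp only [Function.comp_def, Pi.neg_apply, neg_smul, Finset.sum_neg_distrib] at hW
  exact hW

lemma iIndepFun.measure_le_norm_add_sum_smul_pos (hr : ∀ i, Measurable (r i))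
    (hindep : iIndepFun r P) (hsymm : ∀ i, P.map (r i) = P.map (fun ω => -r i ω))
    (hnorm : ∀ i, eLpNorm (r i) ⊤ P = 1) {ε : ι → ℝ} (hε : ∀ i, ε i = 1 ∨ ε i = -1)
    (s : Finset ι) (x : ι → X) (y : X) {ρ : ℝ} (hρ : 0 < ρ)
    (h : ‖y‖ + ρ ≤ ‖y + ∑ i ∈ s, ε i • x i‖) :
    0 < P {ω | ‖y‖ + ρ / 2 ≤ ‖y + ∑ i ∈ s, r i ω • x i‖} := by
  set K := ∑ i ∈ s, ‖x i‖
  have hK : 0 ≤ K := Finset.sum_nonneg fun i _ => norm_nonneg _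
  set η := ρ / (2 * (K + 1))
  have hη : 0 < η := by positivity
  have hηK : η * K ≤ ρ / 2 := by
    rw [div_mul_eq_mul_div, div_le_div_iff₀ (by positivity) two_pos]
    nlinarith
  have hA : 0 < P (⋂ i ∈ s, r i ⁻¹' {u | |u - ε i| ≤ η}) := by
    rw [hindep.measure_inter_preimage_eq_mul s fun i _ => measurableSet_le (by fun_prop)
      measurable_const]
    exact CanonicallyOrderedAdd.prod_pos.2 fun i _ =>
      measure_abs_sub_sign_le_pos (hr i) (hsymm i) (hnorm i) (hε i) hη
  refine hA.trans_le (measure_mono fun ω hω => ?_)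
  simp only [Set.mem_iInter, Set.mem_preimage, Set.mem_ofPred_eq] at hω
  have hclose := (norm_sum_smul_sub_sum_smul_le hω x).trans hηK
  have := norm_sub_norm_le (y + ∑ i ∈ s, ε i • x i) (y + ∑ i ∈ s, r i ω • x i)
  rw [add_sub_add_left_eq_sub, norm_sub_rev] at this
  show ‖y‖ + ρ / 2 ≤ ‖y + ∑ i ∈ s, r i ω • x i‖
  linarith

end Independence

theorem stmt4_general {Ω : Type*} [MeasurableSpace Ω] (P : Measure Ω) [IsProbabilityMeasure P]
    {X : Type*} [NormedAddCommGroup X] [NormedSpace ℝ X]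
    (n : ℕ) (x : ℕ → X)
    (r : ℕ → Ω → ℝ) (hmeas : ∀ i, Measurable (r i))
    (hindep : iIndepFun (m := fun _ => Real.measurableSpace) r P)
    (hsymm : ∀ i, Measure.map (r i) P = Measure.map (fun ω => -(r i ω)) P)
    (hnorm : ∀ i, eLpNorm (r i) ⊤ P = 1)
    (φ : ℝ → ℝ) (hφ : StrictConvexOn ℝ (Set.Ici 0) φ)
    (hφm : MonotoneOn φ (Set.Ici 0))
    (ρ : ℝ) (hρ : 0 < ρ)
    (hx : ∃ ε : ℕ → ℝ, (∀ i, ε i = 1 ∨ ε i = -1) ∧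
      ‖x 1‖ + ρ ≤ ‖∑ i ∈ Finset.Icc 1 n, ε i • x i‖) :
    ∃ δ : ℝ, 0 < δ ∧
      φ ‖x 1‖ + δ ≤ ∫ ω, φ ‖x 1 + ∑ i ∈ Finset.Icc 2 n, r i ω • x i‖ ∂P := by
  obtain ⟨ε, hε, hεx⟩ := hx
  have hn : 1 ≤ n := by
    by_contra! hn
    simp only [Nat.lt_one_iff.1 hn, Finset.Icc_eq_empty_of_lt zero_lt_one, Finset.sum_empty,
      norm_zero] at hεx
    linarith [norm_nonneg (x 1)]
  obtain ⟨ε', hε', hε'x⟩ := exists_sign_norm_sum_Icc_eq_norm_add_sum hn hε x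
  rw [hε'x] at hεx
  borelize X
  have hbound : ∀ᵐ ω ∂P, ‖∑ i ∈ Finset.Icc 2 n, r i ω • x i‖ ≤ ∑ i ∈ Finset.Icc 2 n, ‖x i‖ := by
    filter_upwards [ae_all_iff.2 fun i => ae_abs_le_one_of_eLpNorm_top_eq_one (hnorm i)]
      with ω hω
    refine norm_sum_le_of_le _ fun i _ => ?_
    rw [norm_smul, Real.norm_eq_abs]
    exact mul_le_of_le_one_left (norm_nonneg _) (hω i)
  exact exists_pos_add_le_integral_of_identDistrib_neg hφ hφm
    (iIndepFun.identDistrib_sum_smul_neg hmeas hindep hsymm _ x) hbound (x 1) (half_pos hρ)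
    (iIndepFun.measure_le_norm_add_sum_smul_pos hmeas hindep hsymm hnorm hε' _ x (x 1) hρ hεx)

theorem stmt4 {Ω : Type*} [MeasurableSpace Ω] (P : Measure Ω) [IsProbabilityMeasure P]
    {X : Type*} [NormedAddCommGroup X] [NormedSpace ℝ X] [CompleteSpace X]
    (n : ℕ) (x : ℕ → X)
    (r : ℕ → Ω → ℝ) (hmeas : ∀ i, Measurable (r i))
    (hindep : iIndepFun (m := fun _ => Real.measurableSpace) r P)
    (hsymm : ∀ i, Measure.map (r i) P = Measure.map (fun ω => -(r i ω)) P)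
    (hnorm : ∀ i, eLpNorm (r i) ⊤ P = 1)
    (φ : ℝ → ℝ) (hφ : StrictConvexOn ℝ (Set.Ici 0) φ)
    (hφm : MonotoneOn φ (Set.Ici 0)) (hφ0 : φ 0 = 0)
    (ρ : ℝ) (hρ : 0 < ρ)
    (hx : ∃ ε : ℕ → ℝ, (∀ i, ε i = 1 ∨ ε i = -1) ∧
      ‖x 1‖ + ρ ≤ ‖∑ i ∈ Finset.Icc 1 n, ε i • x i‖) :
    ∃ δ : ℝ, 0 < δ ∧
      φ ‖x 1‖ + δ ≤ ∫ ω, φ ‖x 1 + ∑ i ∈ Finset.Icc 2 n, r i ω • x i‖ ∂P :=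
  stmt4_general P n x r hmeas hindep hsymm hnorm φ hφ hφm ρ hρ hx
end

section
/- Let X be a real Banach space and n ≥ 2. If for every ρ > 0 there exist unit vectors x_1,...,x_n in X such that ‖ε_1 x_1 + ... + ε_n x_n‖ < 1 + ρ for all sign choices ε_i = ±1, then ℓ_∞^n is representable in X. -/
/-!
Let `S v = ∑ vᵢ • xᵢ` on `ℓ_∞^n`. The unit ball of `ℓ_∞^n` is the convex hull of the sign vectors,
so `‖S‖ ≤ 1 + ρ`. If `|vᵢ| = ‖v‖`, flipping the sign of `vᵢ` moves `S v` by `2 vᵢ • xᵢ`, of norm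
`2 ‖v‖`, while the flipped vector still has norm `‖v‖`; hence `‖S v‖ ≥ (2 - ‖S‖) ‖v‖ ≥ (1 - ρ) ‖v‖`.
So `(1 - ρ)⁻¹ • S` has distortion at most `(1 + ρ) / (1 - ρ)`, which tends to `1` as `ρ → 0`.
-/

open Metric Set

section SupNorm

variable {ι : Type*} [Fintype ι]

theorem convexHull_signVectors :
    convexHull ℝ {ε : ι → ℝ | ∀ i, ε i = 1 ∨ ε i = -1} = closedBall 0 1 := by
  have hsigns : {ε : ι → ℝ | ∀ i, ε i = 1 ∨ ε i = -1} = univ.pi fun _ ↦ {1, -1} := by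
    ext ε; simp
  rw [hsigns, convexHull_pi, closedBall_pi _ zero_le_one]
  congr! 2
  rw [convexHull_pair, segment_symm, segment_eq_Icc (by norm_num), Pi.zero_apply,
    Real.closedBall_eq_Icc, zero_sub, zero_add]

theorem Pi.exists_norm_apply_eq_norm {E : ι → Type*} [∀ i, SeminormedAddGroup (E i)]
    [Nonempty ι] (v : ∀ i, E i) : ∃ i, ‖v i‖ = ‖v‖ := by
  obtain ⟨i, -, hi⟩ := Finset.univ.exists_mem_eq_sup Finset.univ_nonempty fun i ↦ ‖v i‖₊
  exact ⟨i, by rw [Pi.norm_def, hi]; rfl⟩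

variable {X : Type*} [NormedAddCommGroup X] [NormedSpace ℝ X]

namespace ContinuousLinearMap

theorem opNorm_le_of_signVectors (T : (ι → ℝ) →L[ℝ] X) {C : ℝ}
    (hC : ∀ ε : ι → ℝ, (∀ i, ε i = 1 ∨ ε i = -1) → ‖T ε‖ ≤ C) : ‖T‖ ≤ C := by
  have hball : closedBall 0 1 ⊆ T ⁻¹' closedBall 0 C := by
    rw [← convexHull_signVectors]
    refine convexHull_min (fun ε hε ↦ ?_) ((convex_closedBall 0 C).linear_preimage T.toLinearMap)
    simpa using hC ε hε
  refine opNorm_le_of_unit_norm ((norm_nonneg _).trans (hC 1 fun _ ↦ .inl rfl)) fun v hv ↦ ?_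
  simpa using hball (mem_closedBall_zero_iff.2 hv.le)

theorem two_sub_opNorm_mul_norm_le [DecidableEq ι] (T : (ι → ℝ) →L[ℝ] X)
    (hT : ∀ i, ‖T (Pi.single i 1)‖ = 1) (v : ι → ℝ) : (2 - ‖T‖) * ‖v‖ ≤ ‖T v‖ := by
  cases isEmpty_or_nonempty ι
  · simp [Subsingleton.elim v 0]
  obtain ⟨i, hi⟩ := Pi.exists_norm_apply_eq_norm v
  set w := v - Pi.single i (2 * v i)
  have hw : ‖w‖ ≤ ‖v‖ := by
    refine (pi_norm_le_iff_of_nonneg (norm_nonneg v)).2 fun j ↦ ?_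
    rcases eq_or_ne j i with rfl | hj
    · simp [w, hi, two_mul]
    · simpa [w, hj] using norm_le_pi_norm v j
  have hdiff : T v - T w = (2 * v i) • T (Pi.single i 1) := by
    rw [← map_sub, ← map_smul, sub_sub_cancel, ← Pi.single_smul, smul_eq_mul, mul_one]
  calc (2 - ‖T‖) * ‖v‖ = ‖T v - T w‖ - ‖T‖ * ‖v‖ := by
        rw [hdiff, norm_smul, hT, norm_mul, hi]; norm_num; ring
    _ ≤ ‖T v‖ + ‖T w‖ - ‖T‖ * ‖w‖ := by gcongr; exact norm_sub_le _ _
    _ ≤ ‖T v‖ := by linarith [T.le_opNorm w]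

end ContinuousLinearMap

end SupNorm

theorem stmt6_general {X : Type*} [NormedAddCommGroup X] [NormedSpace ℝ X]
    (n : ℕ)
    (h : ∀ ρ : ℝ, 0 < ρ → ∃ x : Fin n → X, (∀ i, ‖x i‖ = 1) ∧
      ∀ ε : Fin n → ℝ, (∀ i, ε i = 1 ∨ ε i = -1) → ‖∑ i, ε i • x i‖ < 1 + ρ) :
    ∀ lam : ℝ, 1 < lam → ∃ T : (Fin n → ℝ) →L[ℝ] X,
      ∀ v, ‖v‖ ≤ ‖T v‖ ∧ ‖T v‖ ≤ lam * ‖v‖ := by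
  intro lam hlam
  obtain ⟨ρ, hρ0, hρ1, hρlam⟩ : ∃ ρ : ℝ, 0 < ρ ∧ ρ < 1 ∧ 1 + ρ = lam * (1 - ρ) := by
    refine ⟨(lam - 1) / (lam + 1), by positivity, by rw [div_lt_one (by linarith)]; linarith, ?_⟩
    field_simp
    ring
  obtain ⟨x, hx, hsigns⟩ := h ρ hρ0
  let S : (Fin n → ℝ) →L[ℝ] X := (Fintype.linearCombination ℝ x).toContinuousLinearMap
  have hS : ∀ v, S v = ∑ i, v i • x i := Fintype.linearCombination_apply ℝ x
  have hupper : ‖S‖ ≤ 1 + ρ :=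
    S.opNorm_le_of_signVectors fun ε hε ↦ (hS ε ▸ hsigns ε hε).le
  have hlower (v) : (1 - ρ) * ‖v‖ ≤ ‖S v‖ := by
    refine le_trans ?_ (S.two_sub_opNorm_mul_norm_le (fun i ↦ ?_) v)
    · exact mul_le_mul_of_nonneg_right (by linarith) (norm_nonneg v)
    · simp [S, Fintype.linearCombination_apply_single, hx]
  refine ⟨(1 - ρ)⁻¹ • S, fun v ↦ ?_⟩
  rw [smul_apply, norm_smul, norm_inv, Real.norm_of_nonneg (by linarith),
    ← div_eq_inv_mul, le_div_iff₀ (by linarith), div_le_iff₀ (by linarith)]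
  refine ⟨by linarith [hlower v], ?_⟩
  calc ‖S v‖ ≤ (1 + ρ) * ‖v‖ := S.le_of_opNorm_le hupper v
    _ = lam * ‖v‖ * (1 - ρ) := by rw [hρlam]; ring

theorem stmt6 {X : Type*} [NormedAddCommGroup X] [NormedSpace ℝ X] [CompleteSpace X]
    (n : ℕ) (hn : 2 ≤ n)
    (h : ∀ ρ : ℝ, 0 < ρ → ∃ x : Fin n → X, (∀ i, ‖x i‖ = 1) ∧
      ∀ ε : Fin n → ℝ, (∀ i, ε i = 1 ∨ ε i = -1) → ‖∑ i, ε i • x i‖ < 1 + ρ) :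
    ∀ lam : ℝ, 1 < lam → ∃ T : (Fin n → ℝ) →L[ℝ] X,
      ∀ v, ‖v‖ ≤ ‖T v‖ ∧ ‖T v‖ ≤ lam * ‖v‖ :=
  stmt6_general n h
end

section
/- Let X be a real Banach space, 1 < p < ∞, n ≥ 2, and (M, 𝔐, μ) a measure space containing a measurable set A with 0 < μ(A) < ∞. Then ℓ_∞^n is representable in X if and only if ℓ_∞^n is representable in the Lebesgue–Bochner space L_p(M, μ; X). -/
/-!
The map `x ↦ x • 1_A` is, up to a scalar, an isometry of `X` into `L_p(μ; X)`, which gives one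
direction. Conversely, let `T : ℓ_∞^n → L_p(X)` satisfy `‖y‖ ≤ ‖T y‖ ≤ (1 + e)^(1/p) ‖y‖`, put
`g i = T e_i` and, for sign vectors `θ`, `c θ t = ‖∑ i, θ i • g i t‖`. Pairing `θ` with `θ` flipped
at `i` gives `2^n ‖g i t‖ ≤ ∑ θ, c θ t`, hence `2^n ‖g i t‖^p ≤ ∑ θ, (c θ t)^p` pointwise, while
`∫ ‖g i‖^p ≥ 1` and `∫ (c θ)^p ≤ 1 + e`; so at some point `t` both sides nearly agree for every `i`.
Near-equality in this power-mean inequality forces, by the tangent-line (Bernoulli) inequality for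
`a ↦ a^p`, every `c θ t ≤ (1 + s) ‖g i t‖`. The vectors `x i = g i t` then have norms at least
`m = minᵢ ‖x i‖` and sign sums of norm at most `(1 + s) m`, so `y ↦ ∑ i, y i • x i` embeds `ℓ_∞^n`
into `X` with distortion `(1 + s) / (1 - s)`: sign vectors are the vertices of the unit cube, and
flipping one coordinate of `y` gives the lower bound.
-/

open MeasureTheory

/-- `Y` is representable in `Z`: for each `λ > 1` there is a bounded linear map
`T : Y → Z` with `‖y‖ ≤ ‖Ty‖ ≤ λ‖y‖` for all `y`. -/
def Representable (Y Z : Type*) [NormedAddCommGroup Y] [NormedSpace ℝ Y]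
    [NormedAddCommGroup Z] [NormedSpace ℝ Z] : Prop :=
  ∀ lam : ℝ, 1 < lam → ∃ T : Y →L[ℝ] Z, ∀ y, ‖y‖ ≤ ‖T y‖ ∧ ‖T y‖ ≤ lam * ‖y‖

open scoped ENNReal
open Finset

noncomputable def signVectors (ι : Type*) [Fintype ι] [DecidableEq ι] : Finset (ι → ℝ) :=
  Fintype.piFinset fun _ => {-1, 1}

section SignVectors

variable {ι : Type*} [Fintype ι] [DecidableEq ι]

theorem mem_signVectors {θ : ι → ℝ} : θ ∈ signVectors ι ↔ ∀ i, θ i = -1 ∨ θ i = 1 := by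
  simp [signVectors]

theorem one_mem_signVectors : (1 : ι → ℝ) ∈ signVectors ι :=
  mem_signVectors.2 fun _ => Or.inr rfl

theorem abs_eq_one_of_mem_signVectors {θ : ι → ℝ} (hθ : θ ∈ signVectors ι) (i : ι) :
    |θ i| = 1 := by
  rcases mem_signVectors.1 hθ i with h | h <;> simp [h]

theorem norm_le_one_of_mem_signVectors {θ : ι → ℝ} (hθ : θ ∈ signVectors ι) : ‖θ‖ ≤ 1 :=
  pi_norm_le_iff_of_nonneg zero_le_one |>.2 fun i => (abs_eq_one_of_mem_signVectors hθ i).le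

theorem update_neg_mem_signVectors {θ : ι → ℝ} (hθ : θ ∈ signVectors ι) (i : ι) :
    Function.update θ i (-θ i) ∈ signVectors ι := by
  refine mem_signVectors.2 fun j => ?_
  rcases eq_or_ne j i with rfl | hj
  · rcases mem_signVectors.1 hθ j with h | h <;> simp [h]
  · simpa [hj] using mem_signVectors.1 hθ j

theorem card_signVectors_pos : 0 < #(signVectors ι) :=
  card_pos.2 ⟨1, one_mem_signVectors⟩

theorem ConvexOn.le_of_forall_signVectors_le {f : (ι → ℝ) → ℝ} (hf : ConvexOn ℝ Set.univ f)
    {b : ℝ} (hb : ∀ θ ∈ signVectors ι, f θ ≤ b) {y : ι → ℝ} (hy : ‖y‖ ≤ 1) : f y ≤ b := by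
  suffices key : ∀ s : Finset ι, ∀ y : ι → ℝ, ‖y‖ ≤ 1 → (∀ i ∉ s, y i = -1 ∨ y i = 1) → f y ≤ b
  from key univ y hy (by simp)
  intro s
  induction s using Finset.induction_on with
  | empty => exact fun y _ hy => hb y (mem_signVectors.2 fun i => hy i (notMem_empty i))
  | insert a s _ ih =>
    intro y hy hys
    have hya : |y a| ≤ 1 := (norm_le_pi_norm y a).trans hy
    have hvert : ∀ e : ℝ, |e| = 1 → f (Function.update y a e) ≤ b := by
      intro e he
      refine ih _ (pi_norm_le_iff_of_nonneg zero_le_one |>.2 fun j => ?_) fun j hj => ?_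
      · rcases eq_or_ne j a with rfl | hj
        · simp [he]
        · simpa [hj] using (norm_le_pi_norm y j).trans hy
      · rcases eq_or_ne j a with rfl | hja
        · simpa using ((abs_eq zero_le_one).1 he).symm
        · simpa [hja] using hys j (by simp [hja, hj])
    have hseg : y ∈ segment ℝ (Function.update y a (-1)) (Function.update y a 1) := by
      refine ⟨(1 - y a) / 2, (1 + y a) / 2, by linarith [(abs_le.1 hya).2],
        by linarith [(abs_le.1 hya).1], by ring, funext fun j => ?_⟩
      rcases eq_or_ne j a with rfl | hj
      · simp; ring
      · simp [hj]; ring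
    exact (hf.le_on_segment trivial trivial hseg).trans
      (max_le (hvert (-1) (by simp)) (hvert 1 (by simp)))

end SignVectors

section Bernoulli

variable {q s u : ℝ}

theorem add_mul_rpow_sub_one_mul_sub_le_rpow {a b : ℝ} (hq : 1 ≤ q) (ha : 0 ≤ a) (hb : 0 < b) :
    b ^ q + q * b ^ (q - 1) * (a - b) ≤ a ^ q := by
  have h := one_add_mul_self_le_rpow_one_add (s := a / b - 1)
    (by linarith [div_nonneg ha hb.le]) hq
  rw [add_sub_cancel, Real.div_rpow ha hb.le, le_div_iff₀ (by positivity)] at h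
  calc b ^ q + q * b ^ (q - 1) * (a - b) = (1 + q * (a / b - 1)) * b ^ q := by
        rw [Real.rpow_sub_one hb.ne']; field_simp
    _ ≤ a ^ q := h

noncomputable def bernoulliGap (q s : ℝ) : ℝ := (1 + s) ^ q - 1 - q * s

theorem bernoulliGap_pos (hq : 1 < q) (hs : 0 < s) : 0 < bernoulliGap q s := by
  have := one_add_mul_self_lt_rpow_one_add (by linarith) hs.ne' hq
  unfold bernoulliGap
  linarith

theorem bernoulliGap_mul_rpow_le {c : ℝ} (hq : 1 ≤ q) (hs : 0 ≤ s) (hu : 0 < u)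
    (hc : (1 + s) * u ≤ c) :
    bernoulliGap q s * u ^ q ≤ c ^ q - u ^ q - q * u ^ (q - 1) * (c - u) := by
  have hsu : 0 < (1 + s) * u := by positivity
  have htan := add_mul_rpow_sub_one_mul_sub_le_rpow hq (hsu.le.trans hc) hsu
  have hmono : q * u ^ (q - 1) * (c - (1 + s) * u) ≤
      q * ((1 + s) * u) ^ (q - 1) * (c - (1 + s) * u) := by
    have : u ≤ (1 + s) * u := by nlinarith
    gcongr
  have hpow : u ^ (q - 1) * u = u ^ q := by rw [Real.rpow_sub_one hu.ne', div_mul_cancel₀ _ hu.ne']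
  rw [Real.mul_rpow (by linarith) hu.le] at htan
  unfold bernoulliGap
  linear_combination htan + hmono + q * s * hpow

theorem lt_one_add_mul_of_sum_rpow_sub_lt {κ : Type*} {t : Finset κ} {c : κ → ℝ} (hq : 1 < q)
    (hs : 0 ≤ s) (hu : 0 < u) (hc : ∀ θ ∈ t, 0 ≤ c θ) (hsum : #t * u ≤ ∑ θ ∈ t, c θ)
    (hpow : ∑ θ ∈ t, c θ ^ q - #t * u ^ q < bernoulliGap q s * u ^ q) :
    ∀ θ ∈ t, c θ < (1 + s) * u := by
  intro θ₀ hθ₀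
  by_contra! hlarge
  -- `D a` is the gap between `a ^ q` and the tangent line of `a ↦ a ^ q` at `u`.
  set D : ℝ → ℝ := fun a => a ^ q - u ^ q - q * u ^ (q - 1) * (a - u)
  have hD : ∀ θ ∈ t, 0 ≤ D (c θ) := fun θ hθ => by
    have := add_mul_rpow_sub_one_mul_sub_le_rpow hq.le (hc θ hθ) hu
    simp only [D]
    linarith
  have hsumD : ∑ θ ∈ t, D (c θ) =
      ∑ θ ∈ t, c θ ^ q - #t * u ^ q - q * u ^ (q - 1) * (∑ θ ∈ t, c θ - #t * u) := by
    simp only [D, sum_sub_distrib, ← mul_sum, sum_const, nsmul_eq_mul]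
  have hslack : 0 ≤ q * u ^ (q - 1) * (∑ θ ∈ t, c θ - #t * u) := by
    have : 0 < q := by linarith
    have : 0 ≤ ∑ θ ∈ t, c θ - #t * u := by linarith
    positivity
  linarith [single_le_sum hD hθ₀, bernoulliGap_mul_rpow_le hq.le hs hu hlarge]

end Bernoulli

theorem exists_clm_of_mul_norm_le {Y Z : Type*} [NormedAddCommGroup Y] [NormedSpace ℝ Y]
    [NormedAddCommGroup Z] [NormedSpace ℝ Z] (T : Y →L[ℝ] Z) {a b : ℝ} (ha : 0 < a)
    (hT : ∀ y, a * ‖y‖ ≤ ‖T y‖ ∧ ‖T y‖ ≤ b * ‖y‖) :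
    ∃ T' : Y →L[ℝ] Z, ∀ y, ‖y‖ ≤ ‖T' y‖ ∧ ‖T' y‖ ≤ b / a * ‖y‖ := by
  refine ⟨a⁻¹ • T, fun y => ?_⟩
  rw [smul_apply, norm_smul, norm_inv, Real.norm_of_nonneg ha.le,
    le_inv_mul_iff₀ ha, inv_mul_le_iff₀ ha, div_mul_eq_mul_div, mul_div_assoc',
    mul_div_cancel_left₀ _ ha.ne']
  exact hT y

section LinearCombination

variable {ι X : Type*} [Fintype ι] [DecidableEq ι] [NormedAddCommGroup X] [NormedSpace ℝ X]
  (x : ι → X)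

theorem linearCombination_sub_update_neg (y : ι → ℝ) (i : ι) :
    Fintype.linearCombination ℝ x y - Fintype.linearCombination ℝ x (Function.update y i (-y i))
      = (2 * y i) • x i := by
  rw [← map_sub, ← Fintype.linearCombination_apply_single ℝ x i]
  congr 1
  funext j
  rcases eq_or_ne j i with rfl | hj
  · simp; ring
  · simp [hj]

theorem norm_linearCombination_le_of_signVectors {b : ℝ}
    (hb : ∀ θ ∈ signVectors ι, ‖Fintype.linearCombination ℝ x θ‖ ≤ b) (y : ι → ℝ) :
    ‖Fintype.linearCombination ℝ x y‖ ≤ b * ‖y‖ := by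
  rcases eq_or_ne y 0 with rfl | hy
  · simp
  have hy0 : 0 < ‖y‖ := norm_pos_iff.2 hy
  have hconv : ConvexOn ℝ Set.univ fun z => ‖Fintype.linearCombination ℝ x z‖ :=
    convexOn_univ_norm.comp_linearMap _
  have := hconv.le_of_forall_signVectors_le hb (y := ‖y‖⁻¹ • y)
    (by rw [norm_smul, norm_inv, norm_norm, inv_mul_cancel₀ hy0.ne'])
  rwa [map_smul, norm_smul, norm_inv, norm_norm, inv_mul_le_iff₀ hy0, mul_comm] at this

theorem mul_norm_le_norm_linearCombination_of_signVectors {m b : ℝ} (hm : 0 < m)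
    (hx : ∀ i, m ≤ ‖x i‖) (hb : ∀ θ ∈ signVectors ι, ‖Fintype.linearCombination ℝ x θ‖ ≤ b)
    (y : ι → ℝ) : (2 * m - b) * ‖y‖ ≤ ‖Fintype.linearCombination ℝ x y‖ := by
  set L := Fintype.linearCombination ℝ x
  have hb0 : 0 ≤ b := (norm_nonneg _).trans (hb 1 one_mem_signVectors)
  have hcoord : ∀ i, 2 * m * |y i| ≤ ‖L y‖ + b * ‖y‖ := by
    intro i
    set y' := Function.update y i (-y i)
    have hy' : ‖y'‖ ≤ ‖y‖ := pi_norm_le_iff_of_nonneg (norm_nonneg _) |>.2 fun j => by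
      rcases eq_or_ne j i with rfl | hj
      · simpa [y'] using norm_le_pi_norm y j
      · simpa [y', hj] using norm_le_pi_norm y j
    calc 2 * m * |y i| ≤ 2 * |y i| * ‖x i‖ := by nlinarith [hx i, abs_nonneg (y i)]
      _ = ‖L y - L y'‖ := by
        rw [linearCombination_sub_update_neg, norm_smul, Real.norm_eq_abs, abs_mul, abs_two]
      _ ≤ ‖L y‖ + ‖L y'‖ := norm_sub_le _ _
      _ ≤ ‖L y‖ + b * ‖y‖ := by
        gcongr
        exact (norm_linearCombination_le_of_signVectors x hb y').trans (by gcongr)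
  have : ‖y‖ ≤ (‖L y‖ + b * ‖y‖) / (2 * m) :=
    pi_norm_le_iff_of_nonneg (by positivity) |>.2 fun i => by
      rw [le_div_iff₀ (by positivity), Real.norm_eq_abs]
      linarith [hcoord i]
  rw [le_div_iff₀ (by positivity)] at this
  linarith

theorem card_mul_norm_le_sum_norm_linearCombination (i : ι) :
    #(signVectors ι) * ‖x i‖ ≤ ∑ θ ∈ signVectors ι, ‖Fintype.linearCombination ℝ x θ‖ := by
  set L := Fintype.linearCombination ℝ x
  set flip : (ι → ℝ) → ι → ℝ := fun θ => Function.update θ i (-θ i)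
  have hflip : ∑ θ ∈ signVectors ι, ‖L (flip θ)‖ = ∑ θ ∈ signVectors ι, ‖L θ‖ :=
    sum_nbij' flip flip (fun θ hθ => update_neg_mem_signVectors hθ i)
      (fun θ hθ => update_neg_mem_signVectors hθ i) (fun θ _ => by simp [flip])
      (fun θ _ => by simp [flip]) fun _ _ => rfl
  have hpair : ∀ θ ∈ signVectors ι, 2 * ‖x i‖ ≤ ‖L θ‖ + ‖L (flip θ)‖ := fun θ hθ =>
    calc 2 * ‖x i‖ = ‖L θ - L (flip θ)‖ := by
          rw [linearCombination_sub_update_neg, norm_smul, Real.norm_eq_abs, abs_mul,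
            abs_eq_one_of_mem_signVectors hθ, abs_two, mul_one]
      _ ≤ ‖L θ‖ + ‖L (flip θ)‖ := norm_sub_le _ _
  have := sum_le_sum hpair
  rw [sum_add_distrib, hflip, sum_const, nsmul_eq_mul] at this
  linarith

theorem card_mul_norm_rpow_le_sum_norm_linearCombination_rpow {q : ℝ} (hq : 1 ≤ q) (i : ι) :
    #(signVectors ι) * ‖x i‖ ^ q ≤
      ∑ θ ∈ signVectors ι, ‖Fintype.linearCombination ℝ x θ‖ ^ q := by
  have hN : (0 : ℝ) < #(signVectors ι) := by exact_mod_cast card_signVectors_pos (ι := ι)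
  have h := (Real.rpow_le_rpow (by positivity) (card_mul_norm_le_sum_norm_linearCombination x i)
    (by linarith)).trans
      (Real.rpow_sum_le_const_mul_sum_rpow_of_nonneg _ hq fun _ _ => norm_nonneg _)
  rwa [Real.mul_rpow hN.le (norm_nonneg _), ← div_mul_cancel₀ ((#(signVectors ι) : ℝ) ^ q) hN.ne',
    ← Real.rpow_sub_one hN.ne', mul_assoc, mul_le_mul_iff_right₀ (by positivity)] at h

theorem norm_linearCombination_lt_of_sum_rpow_sub_lt {q s ε : ℝ} (hq : 1 < q) (hs : 0 < s)
    (hε : ε * #(signVectors ι) ≤ bernoulliGap q s * (1 - ε))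
    (hx : ∀ i, ∑ θ ∈ signVectors ι, ‖Fintype.linearCombination ℝ x θ‖ ^ q
      - #(signVectors ι) * ‖x i‖ ^ q
        < ε * ∑ θ ∈ signVectors ι, ‖Fintype.linearCombination ℝ x θ‖ ^ q)
    (θ : ι → ℝ) (hθ : θ ∈ signVectors ι) (i : ι) :
    ‖Fintype.linearCombination ℝ x θ‖ < (1 + s) * ‖x i‖ := by
  have hN : (0 : ℝ) < #(signVectors ι) := by exact_mod_cast card_signVectors_pos (ι := ι)
  have hη := bernoulliGap_pos hq hs
  have hε1 : ε < 1 := by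
    by_contra! h
    nlinarith
  have hS : 0 ≤ ∑ θ ∈ signVectors ι, ‖Fintype.linearCombination ℝ x θ‖ ^ q :=
    sum_nonneg fun _ _ => by positivity
  have hu : 0 < ‖x i‖ := by
    refine (norm_nonneg _).lt_of_ne' fun h0 => ?_
    have := hx i
    rw [h0, Real.zero_rpow (by linarith)] at this
    nlinarith
  have hxi := hx i
  have hpos : 0 < ‖x i‖ ^ q := by positivity
  refine lt_one_add_mul_of_sum_rpow_sub_lt hq hs.le hu (fun _ _ => norm_nonneg _)
    (card_mul_norm_le_sum_norm_linearCombination x i) ?_ θ hθ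
  nlinarith [mul_le_mul_of_nonneg_right hε hpos.le]

theorem exists_clm_of_norm_linearCombination_lt [Nonempty ι] {s : ℝ} (hs : s < 1)
    (hx : ∀ θ ∈ signVectors ι, ∀ i, ‖Fintype.linearCombination ℝ x θ‖ < (1 + s) * ‖x i‖) :
    ∃ T : (ι → ℝ) →L[ℝ] X, ∀ y, ‖y‖ ≤ ‖T y‖ ∧ ‖T y‖ ≤ (1 + s) / (1 - s) * ‖y‖ := by
  obtain ⟨i₀, hi₀⟩ := Finite.exists_min fun i => ‖x i‖
  have hm : 0 < ‖x i₀‖ := by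
    have := (norm_nonneg _).trans_lt (hx 1 one_mem_signVectors i₀)
    exact (norm_nonneg _).lt_of_ne' fun h => by simp [h] at this
  have hb : ∀ θ ∈ signVectors ι, ‖Fintype.linearCombination ℝ x θ‖ ≤ (1 + s) * ‖x i₀‖ :=
    fun θ hθ => (hx θ hθ i₀).le
  have := exists_clm_of_mul_norm_le (Fintype.linearCombination ℝ x).toContinuousLinearMap
    (a := (1 - s) * ‖x i₀‖) (b := (1 + s) * ‖x i₀‖) (by nlinarith) fun y =>
      ⟨by
        rw [LinearMap.coe_toContinuousLinearMap']
        linarith [mul_norm_le_norm_linearCombination_of_signVectors x hm hi₀ hb y],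
        by simpa using norm_linearCombination_le_of_signVectors x hb y⟩
  rwa [mul_div_mul_right _ _ hm.ne'] at this

end LinearCombination

theorem Fintype.linearCombination_apply_single_one {ι Y F : Type*} [Fintype ι] [DecidableEq ι]
    [AddCommGroup Y] [Module ℝ Y] [FunLike F (ι → ℝ) Y] [LinearMapClass F ℝ (ι → ℝ) Y] (T : F)
    (y : ι → ℝ) : Fintype.linearCombination ℝ (fun i => T (Pi.single i 1)) y = T y := by
  simp only [Fintype.linearCombination_apply, ← map_smul, ← map_sum, ← Pi.single_smul',
    smul_eq_mul, mul_one, univ_sum_single]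

section Integral

variable {M : Type*} [MeasurableSpace M] {μ : Measure M}

theorem exists_forall_sub_lt_mul_of_integral_le {ι : Type*} [Fintype ι] [Nonempty ι]
    {f : M → ℝ} {g : ι → M → ℝ} {a d ε : ℝ} (hf : Integrable f μ) (hg : ∀ i, Integrable (g i) μ)
    (hgf : ∀ i t, g i t ≤ f t) (hga : ∀ i, a ≤ ∫ t, g i t ∂μ) (hfd : ∫ t, f t ∂μ ≤ a + d)
    (hε : 0 ≤ ε) (hd : Fintype.card ι * d < ε * a) :
    ∃ t, ∀ i, f t - g i t < ε * f t := by
  have hfa : a ≤ ∫ t, f t ∂μ :=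
    (hga (Classical.arbitrary ι)).trans (integral_mono (hg _) hf (hgf _))
  have hneg : ∫ t, (∑ i, (f t - g i t) - ε * f t) ∂μ < 0 := by
    have hsub : ∀ i, Integrable (fun t => f t - g i t) μ := fun i => hf.sub (hg i)
    rw [integral_sub (integrable_finsetSum _ fun i _ => hsub i) (hf.const_mul ε),
      integral_finsetSum _ fun i _ => hsub i, integral_const_mul]
    simp_rw [integral_sub hf (hg _)]
    calc ∑ i, ((∫ t, f t ∂μ) - ∫ t, g i t ∂μ) - ε * ∫ t, f t ∂μ ≤ ∑ _i : ι, d - ε * a := by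
          gcongr with i
          linarith [hga i]
      _ < 0 := by simpa using hd
  obtain ⟨t, ht⟩ : ∃ t, ∑ i, (f t - g i t) - ε * f t < 0 := by
    by_contra! h
    exact (integral_nonneg h).not_gt hneg
  refine ⟨t, fun i => ?_⟩
  have := single_le_sum (f := fun i => f t - g i t) (fun j _ => sub_nonneg.2 (hgf j t)) (mem_univ i)
  linarith

end Integral

section Lp

variable {M X : Type*} [MeasurableSpace M] {μ : Measure M} [NormedAddCommGroup X] {p : ℝ≥0∞}

theorem Lp.integral_norm_rpow_eq (hp0 : p ≠ 0) (hp : p ≠ ⊤) (f : Lp X p μ) :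
    ∫ t, ‖f t‖ ^ p.toReal ∂μ = ‖f‖ ^ p.toReal := by
  have hint : 0 ≤ ∫ t, ‖f t‖ ^ p.toReal ∂μ := integral_nonneg fun _ => by positivity
  rw [Lp.norm_def, (Lp.memLp f).eLpNorm_eq_integral_rpow_norm hp0 hp,
    ENNReal.toReal_ofReal (by positivity),
    Real.rpow_inv_rpow hint (ENNReal.toReal_ne_zero.2 ⟨hp0, hp⟩)]

variable [NormedSpace ℝ X]

theorem Lp.coeFn_linearCombination {ι : Type*} [Fintype ι] (g : ι → Lp X p μ) (θ : ι → ℝ) :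
    ⇑(Fintype.linearCombination ℝ g θ) =ᵐ[μ]
      fun t => Fintype.linearCombination ℝ (fun i => g i t) θ := by
  filter_upwards [Lp.coeFn_fun_finsetSum univ fun i => θ i • g i,
    Filter.eventually_all.2 fun i => Lp.coeFn_smul (θ i) (g i)] with t hsum hsmul
  simp only [Fintype.linearCombination_apply, hsum, hsmul, Pi.smul_apply]

theorem exists_sum_norm_linearCombination_rpow_sub_lt [Fact (1 ≤ p)] (hp : p ≠ ⊤)
    {ι : Type*} [Fintype ι] [DecidableEq ι] [Nonempty ι] (g : ι → Lp X p μ) (hg : ∀ i, 1 ≤ ‖g i‖)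
    {lam ε : ℝ} (hlam : ∀ θ ∈ signVectors ι, ‖Fintype.linearCombination ℝ g θ‖ ≤ lam)
    (hε0 : 0 ≤ ε) (hε : Fintype.card ι * (lam ^ p.toReal - 1) < ε) :
    ∃ x : ι → X, ∀ i, ∑ θ ∈ signVectors ι, ‖Fintype.linearCombination ℝ x θ‖ ^ p.toReal
      - #(signVectors ι) * ‖x i‖ ^ p.toReal
        < ε * ∑ θ ∈ signVectors ι, ‖Fintype.linearCombination ℝ x θ‖ ^ p.toReal := by
  set q := p.toReal
  have hp0 : p ≠ 0 := (zero_lt_one.trans_le Fact.out).ne'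
  have hq : 1 ≤ q := by simpa using ENNReal.toReal_mono hp (Fact.out : 1 ≤ p)
  have hN : (0 : ℝ) < #(signVectors ι) := by exact_mod_cast card_signVectors_pos (ι := ι)
  set c : (ι → ℝ) → M → ℝ := fun θ t => ‖Fintype.linearCombination ℝ (fun i => g i t) θ‖ ^ q
  have hc : ∀ θ, Integrable (c θ) μ := fun θ =>
    ((Lp.memLp _).ae_eq (Lp.coeFn_linearCombination g θ)).integrable_norm_rpow hp0 hp
  have hc_int : ∀ θ, ∫ t, c θ t ∂μ = ‖Fintype.linearCombination ℝ g θ‖ ^ q := fun θ =>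
    (integral_congr_ae ((Lp.coeFn_linearCombination g θ).mono fun t ht => by
      simp only [c, ht]; rfl)).symm.trans (Lp.integral_norm_rpow_eq hp0 hp _)
  obtain ⟨t, ht⟩ := exists_forall_sub_lt_mul_of_integral_le (μ := μ)
    (f := fun t => ∑ θ ∈ signVectors ι, c θ t)
    (g := fun i t => #(signVectors ι) * ‖g i t‖ ^ q) (a := #(signVectors ι))
    (d := #(signVectors ι) * (lam ^ q - 1)) (integrable_finsetSum _ fun θ _ => hc θ)
    (fun i => ((Lp.memLp (g i)).integrable_norm_rpow hp0 hp).const_mul _)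
    (fun i t => card_mul_norm_rpow_le_sum_norm_linearCombination_rpow (fun i => g i t) hq i)
    (fun i => by
      rw [integral_const_mul, Lp.integral_norm_rpow_eq hp0 hp]
      exact le_mul_of_one_le_right hN.le (Real.one_le_rpow (hg i) (by linarith)))
    (by
      rw [integral_finsetSum _ fun θ _ => hc θ]
      calc ∑ θ ∈ signVectors ι, ∫ t, c θ t ∂μ ≤ ∑ _θ ∈ signVectors ι, lam ^ q := by
            refine sum_le_sum fun θ hθ => ?_
            rw [hc_int]
            exact Real.rpow_le_rpow (norm_nonneg _) (hlam θ hθ) (by linarith)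
        _ = _ := by rw [sum_const, nsmul_eq_mul]; ring)
    hε0 (by nlinarith)
  exact ⟨fun i => g i t, ht⟩

end Lp

theorem Representable.of_norm_eq_mul {Y Z W : Type*} [NormedAddCommGroup Y] [NormedSpace ℝ Y]
    [NormedAddCommGroup Z] [NormedSpace ℝ Z] [NormedAddCommGroup W] [NormedSpace ℝ W]
    (J : Z →L[ℝ] W) {κ : ℝ} (hκ : 0 < κ) (hJ : ∀ z, ‖J z‖ = κ * ‖z‖)
    (h : Representable Y Z) : Representable Y W := by
  intro lam hlam
  obtain ⟨T, hT⟩ := h lam hlam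
  have := exists_clm_of_mul_norm_le (J.comp T) hκ (b := κ * lam) fun y => by
    rw [J.comp_apply, hJ, mul_assoc]
    exact ⟨by gcongr; exact (hT y).1, by gcongr; exact (hT y).2⟩
  rwa [mul_div_cancel_left₀ _ hκ.ne'] at this

section Representable

variable {M X : Type*} [MeasurableSpace M] {μ : Measure M} [NormedAddCommGroup X]
  [NormedSpace ℝ X] {p : ℝ≥0∞}

theorem indicatorConstLp_smul {A : Set M} (hA : MeasurableSet A) (hμA : μ A ≠ ⊤) (r : ℝ) (x : X) :
    indicatorConstLp p hA hμA (r • x) = r • indicatorConstLp p hA hμA x := by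
  apply Lp.ext
  filter_upwards [indicatorConstLp_coeFn (p := p) (hs := hA) (hμs := hμA) (c := r • x),
    Lp.coeFn_smul r (indicatorConstLp p hA hμA x),
    indicatorConstLp_coeFn (p := p) (hs := hA) (hμs := hμA) (c := x)] with t h1 h2 h3
  rw [h1, h2, Pi.smul_apply, h3]
  by_cases ht : t ∈ A <;> simp [Set.indicator, ht]

variable [Fact (1 ≤ p)]

theorem representable_Lp_of_representable {Y : Type*} [NormedAddCommGroup Y] [NormedSpace ℝ Y]
    {A : Set M} (hA : MeasurableSet A) (hA0 : μ A ≠ 0) (hAtop : μ A ≠ ⊤) (hp : p ≠ ⊤)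
    (h : Representable Y X) : Representable Y (Lp X p μ) := by
  have hp0 : p ≠ 0 := (zero_lt_one.trans_le Fact.out).ne'
  let J : X →ₗ[ℝ] Lp X p μ :=
    { toFun := indicatorConstLp p hA hAtop
      map_add' := fun _ _ => indicatorConstLp_add.symm
      map_smul' := indicatorConstLp_smul hA hAtop }
  have hJ : ∀ x, ‖J x‖ = μ.real A ^ (1 / p.toReal) * ‖x‖ := fun x =>
    (norm_indicatorConstLp (hs := hA) (hμs := hAtop) hp0 hp).trans (mul_comm _ _)
  have hκ : 0 < μ.real A ^ (1 / p.toReal) := Real.rpow_pos_of_pos (ENNReal.toReal_pos hA0 hAtop) _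
  exact h.of_norm_eq_mul (J.mkContinuous _ fun x => (hJ x).le) hκ hJ

theorem exists_clm_of_clm_Lp (hp1 : 1 < p) (hp : p ≠ ⊤) {ι : Type*} [Fintype ι] [DecidableEq ι]
    [Nonempty ι] {s ε lam : ℝ} (hs0 : 0 < s) (hs1 : s < 1) (hε0 : 0 ≤ ε)
    (hε : ε * #(signVectors ι) ≤ bernoulliGap p.toReal s * (1 - ε))
    (hlam : Fintype.card ι * (lam ^ p.toReal - 1) < ε) (T : (ι → ℝ) →L[ℝ] Lp X p μ)
    (hT : ∀ y, ‖y‖ ≤ ‖T y‖ ∧ ‖T y‖ ≤ lam * ‖y‖) :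
    ∃ T' : (ι → ℝ) →L[ℝ] X, ∀ y, ‖y‖ ≤ ‖T' y‖ ∧ ‖T' y‖ ≤ (1 + s) / (1 - s) * ‖y‖ := by
  have hq : 1 < p.toReal := by simpa using ENNReal.toReal_strict_mono hp hp1
  have hlam0 : 0 ≤ lam := by
    have h1 : (0 : ℝ) < ‖(1 : ι → ℝ)‖ := norm_pos_iff.2 one_ne_zero
    nlinarith [(hT 1).2, norm_nonneg (T 1)]
  obtain ⟨x, hx⟩ := exists_sum_norm_linearCombination_rpow_sub_lt hp (fun i => T (Pi.single i 1))
    (fun i => by simpa [Pi.norm_single] using (hT (Pi.single i 1)).1) (fun θ hθ => by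
      rw [Fintype.linearCombination_apply_single_one]
      exact (hT θ).2.trans (mul_le_of_le_one_right hlam0 (norm_le_one_of_mem_signVectors hθ)))
    hε0 hlam
  exact exists_clm_of_norm_linearCombination_lt x hs1
    (norm_linearCombination_lt_of_sum_rpow_sub_lt x hq hs0 hε hx)

theorem representable_of_representable_Lp (hp1 : 1 < p) (hp : p ≠ ⊤) {ι : Type*} [Fintype ι]
    [DecidableEq ι] (h : Representable (ι → ℝ) (Lp X p μ)) : Representable (ι → ℝ) X := by
  rcases isEmpty_or_nonempty ι with hι | hι
  · exact fun _ _ => ⟨0, fun y => by simp [Subsingleton.elim y 0]⟩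
  intro lam hlam
  have hq : 1 < p.toReal := by simpa using ENNReal.toReal_strict_mono hp hp1
  -- `s` is chosen so that `(1 + s) / (1 - s) = lam`, and `ε` so that
  -- `ε * #(signVectors ι) = bernoulliGap p.toReal s * (1 - ε)`.
  set s := (lam - 1) / (lam + 1)
  have hs0 : 0 < s := div_pos (by linarith) (by linarith)
  have hη := bernoulliGap_pos hq hs0
  set ε := bernoulliGap p.toReal s / (#(signVectors ι) + bernoulliGap p.toReal s)
  have hε : 0 < ε := by positivity
  set e := ε / (Fintype.card ι + 1)
  have he : 0 < e := div_pos hε (by positivity)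
  obtain ⟨T, hT⟩ := h ((1 + e) ^ p.toReal⁻¹) (Real.one_lt_rpow (by linarith) (by positivity))
  have := exists_clm_of_clm_Lp hp1 hp hs0 ((div_lt_one (by linarith)).2 (by linarith)) hε.le
    (by simp only [ε]; field_simp; simp) (by
      rw [Real.rpow_inv_rpow (by positivity) (by positivity), add_sub_cancel_left, ← mul_div_assoc,
        div_lt_iff₀ (by positivity)]
      linarith) T hT
  rwa [show (1 + s) / (1 - s) = lam by simp only [s]; field_simp; ring] at this

end Representable

theorem stmt8_general {X : Type*} [NormedAddCommGroup X] [NormedSpace ℝ X]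
    {M : Type*} [MeasurableSpace M] (μ : Measure M)
    (hA : ∃ A : Set M, MeasurableSet A ∧ 0 < μ A ∧ μ A < ⊤)
    (p : ENNReal) (hp1 : 1 < p) (hptop : p ≠ ⊤) [Fact (1 ≤ p)]
    (n : ℕ) :
    Representable (Fin n → ℝ) X ↔ Representable (Fin n → ℝ) (Lp X p μ) := by
  obtain ⟨A, hA, hA0, hAtop⟩ := hA
  exact ⟨representable_Lp_of_representable hA hA0.ne' hAtop.ne hptop,
    representable_of_representable_Lp hp1 hptop⟩

theorem stmt8 {X : Type*} [NormedAddCommGroup X] [NormedSpace ℝ X] [CompleteSpace X]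
    {M : Type*} [MeasurableSpace M] (μ : Measure M)
    (hA : ∃ A : Set M, MeasurableSet A ∧ 0 < μ A ∧ μ A < ⊤)
    (p : ENNReal) (hp1 : 1 < p) (hptop : p ≠ ⊤) [Fact (1 ≤ p)]
    (n : ℕ) (hn : 2 ≤ n) :
    Representable (Fin n → ℝ) X ↔ Representable (Fin n → ℝ) (Lp X p μ) :=
  stmt8_general μ hA p hp1 hptop n
end

section
/- Let 1 < p < ∞ and n ≥ 2, let (r_i) be the Rademacher sequence, and suppose there is ρ ∈ (0, 1/2) such that for all unit vectors x_1,...,x_n in X, E[‖r_1 x_1 + ... + r_n x_n‖^p] ≥ (1+ρ)^p. Then for all unit vectors f_1,...,f_n in L_p(μ; X), E[‖r_1 f_1 + ... + r_n f_n‖_{L_p(X)}^p] ≥ min{(1 + ρ/2)^p, 1 + ρ/(3n)}. -/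
/-!
Averaging over the `2 ^ n` sign patterns turns `𝔼 ‖∑ rᵢ gᵢ‖ ^ p` into a finite average. For fixed
`g` this average dominates `max ‖gᵢ‖ ^ p` (pair each sign pattern with the one flipped at `i` and
use convexity) and `(1 + ρ) ^ p * min ‖gᵢ‖ ^ p` (apply the hypothesis on `X` to `gᵢ / ‖gᵢ‖` and the
contraction principle). If the minimum is at least a `((1 + ρ/2) / (1 + ρ)) ^ p` fraction of the
maximum, the second bound yields the factor `(1 + ρ/2) ^ p`; otherwise
`∑ ‖gᵢ‖ ^ p ≤ (n - ρ/3) max ‖gᵢ‖ ^ p` and the first bound yields `1 + ρ/(3n)`. Applied to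
`gᵢ = fᵢ(w)` and integrated over `w` (Fubini), using `∑ ‖fᵢ‖ ^ p = n`, this gives the theorem.
-/

open MeasureTheory ProbabilityTheory Finset

section Convexity

variable {E : Type*} [NormedAddCommGroup E] [NormedSpace ℝ E] {p : ℝ}

lemma norm_smul_add_smul_rpow_le (hp : 1 ≤ p) (x y : E) {a b : ℝ} (ha : 0 ≤ a) (hb : 0 ≤ b)
    (hab : a + b = 1) : ‖a • x + b • y‖ ^ p ≤ a * ‖x‖ ^ p + b * ‖y‖ ^ p := by
  have hle : ‖a • x + b • y‖ ≤ a * ‖x‖ + b * ‖y‖ := by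
    simpa [norm_smul, abs_of_nonneg ha, abs_of_nonneg hb] using norm_add_le (a • x) (b • y)
  calc ‖a • x + b • y‖ ^ p ≤ (a * ‖x‖ + b * ‖y‖) ^ p :=
        Real.rpow_le_rpow (norm_nonneg _) hle (by linarith)
    _ ≤ a * ‖x‖ ^ p + b * ‖y‖ ^ p := by
        simpa using (convexOn_rpow hp).2 (norm_nonneg x) (norm_nonneg y) ha hb hab

lemma two_mul_norm_rpow_le (hp : 1 ≤ p) (v u : E) :
    2 * ‖v‖ ^ p ≤ ‖v + u‖ ^ p + ‖v - u‖ ^ p := by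
  have h := norm_smul_add_smul_rpow_le hp (v + u) (v - u) (by norm_num : (0 : ℝ) ≤ 1 / 2)
    (by norm_num : (0 : ℝ) ≤ 1 / 2) (by norm_num)
  have hv : (1 / 2 : ℝ) • (v + u) + (1 / 2 : ℝ) • (v - u) = v := by module
  rw [hv] at h
  linarith

/-- `t ↦ ‖v + t • u‖ ^ p + ‖v - t • u‖ ^ p` is even and convex, hence monotone on `[0, ∞)`. -/
lemma norm_add_smul_rpow_add_norm_sub_smul_rpow_le (hp : 1 ≤ p) (v u : E) {a b : ℝ}
    (ha : 0 ≤ a) (hab : a ≤ b) :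
    ‖v + a • u‖ ^ p + ‖v - a • u‖ ^ p ≤ ‖v + b • u‖ ^ p + ‖v - b • u‖ ^ p := by
  rcases hab.eq_or_lt with rfl | hab
  · rfl
  have hb : 0 < b := ha.trans_lt hab
  set l := (b + a) / (2 * b)
  set k := (b - a) / (2 * b)
  have hl : 0 ≤ l := by positivity
  have hk : 0 ≤ k := div_nonneg (by linarith) (by positivity)
  have hlk : l + k = 1 := by simp only [l, k]; field_simp; ring
  have hlkb : (l - k) * b = a := by simp only [l, k]; field_simp; ring
  have h₁ : v + a • u = l • (v + b • u) + k • (v - b • u) := by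
    rw [← hlkb]; linear_combination (norm := module) hlk.symm • v
  have h₂ : v - a • u = k • (v + b • u) + l • (v - b • u) := by
    rw [← hlkb]; linear_combination (norm := module) hlk.symm • v
  have h₃ := norm_smul_add_smul_rpow_le hp (v + b • u) (v - b • u) hl hk hlk
  have h₄ := norm_smul_add_smul_rpow_le hp (v + b • u) (v - b • u) hk hl (by linarith)
  rw [h₁, h₂]
  linear_combination h₃ + h₄ + (‖v + b • u‖ ^ p + ‖v - b • u‖ ^ p) * hlk

end Convexity

section Arithmetic

variable {p ρ : ℝ}

lemma one_add_half_div_one_add_rpow_le (hp : 1 ≤ p) (hρ0 : 0 ≤ ρ) (hρ1 : ρ ≤ 1 / 2) :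
    ((1 + ρ / 2) / (1 + ρ)) ^ p ≤ 1 - ρ / 3 := by
  have h0 : 0 < (1 + ρ / 2) / (1 + ρ) := by positivity
  have h1 : (1 + ρ / 2) / (1 + ρ) ≤ 1 := (div_le_one (by linarith)).2 (by linarith)
  calc ((1 + ρ / 2) / (1 + ρ)) ^ p ≤ ((1 + ρ / 2) / (1 + ρ)) ^ (1 : ℝ) :=
        Real.rpow_le_rpow_of_exponent_ge h0 h1 hp
    _ ≤ 1 - ρ / 3 := by
        rw [Real.rpow_one, div_le_iff₀ (by linarith)]
        nlinarith

lemma min_mul_le_of_le_max_min (hp : 1 ≤ p) (hρ0 : 0 < ρ) (hρ1 : ρ < 1 / 2) {n S A m Φ : ℝ}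
    (hn : 1 ≤ n) (hS0 : 0 ≤ S) (hm0 : 0 ≤ m) (hS : S ≤ (n - 1) * A + m) (hmA : m ≤ A)
    (hA : A ≤ Φ) (hm : (1 + ρ) ^ p * m ≤ Φ) :
    min ((1 + ρ / 2) ^ p) (1 + ρ / (3 * n)) * S ≤ n * Φ := by
  have hA0 : 0 ≤ A := hm0.trans hmA
  rcases le_or_gt ((1 + ρ / 2) ^ p * A) ((1 + ρ) ^ p * m) with h | h
  · calc min ((1 + ρ / 2) ^ p) (1 + ρ / (3 * n)) * S ≤ (1 + ρ / 2) ^ p * (n * A) :=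
          mul_le_mul (min_le_left _ _) (by nlinarith) hS0 (by positivity)
      _ = n * ((1 + ρ / 2) ^ p * A) := by ring
      _ ≤ n * Φ := mul_le_mul_of_nonneg_left (h.trans hm) (by linarith)
  · have hmc : m ≤ (1 - ρ / 3) * A := by
      have : m < ((1 + ρ / 2) / (1 + ρ)) ^ p * A := by
        rw [Real.div_rpow (by linarith) (by linarith), div_mul_eq_mul_div,
          lt_div_iff₀ (by positivity)]
        linarith
      nlinarith [one_add_half_div_one_add_rpow_le hp hρ0.le hρ1.le]
    calc min ((1 + ρ / 2) ^ p) (1 + ρ / (3 * n)) * S ≤ (1 + ρ / (3 * n)) * ((n - ρ / 3) * A) :=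
          mul_le_mul (min_le_right _ _) (by nlinarith) hS0 (by positivity)
      _ = (n - ρ ^ 2 / (9 * n)) * A := by field_simp; ring
      _ ≤ n * A := by gcongr; linarith [show 0 ≤ ρ ^ 2 / (9 * n) by positivity]
      _ ≤ n * Φ := mul_le_mul_of_nonneg_left hA (by linarith)

end Arithmetic

section RademacherMoment

variable {ι : Type*} [DecidableEq ι] {E : Type*} [NormedAddCommGroup E] [NormedSpace ℝ E]
  {p ρ : ℝ}

/-- A sign pattern on a finite set `s` is encoded by the subset `T ⊆ s` where it is `+1`. -/
noncomputable def subsetSign (T : Finset ι) (i : ι) : ℝ := if i ∈ T then 1 else -1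

/-- The Rademacher moment `𝔼 ‖v + ∑_{i ∈ s} rᵢ • gᵢ‖ ^ p`, written as an average over the
`2 ^ #s` sign patterns on `s`. -/
noncomputable def rademacherMoment (p : ℝ) (s : Finset ι) (v : E) (g : ι → E) : ℝ :=
  (∑ T ∈ s.powerset, ‖v + ∑ i ∈ s, subsetSign T i • g i‖ ^ p) / 2 ^ #s

lemma rademacherMoment_empty (v : E) (g : ι → E) : rademacherMoment p ∅ v g = ‖v‖ ^ p := by
  simp [rademacherMoment]

lemma rademacherMoment_nonneg (s : Finset ι) (v : E) (g : ι → E) :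
    0 ≤ rademacherMoment p s v g :=
  div_nonneg (sum_nonneg fun _ _ ↦ Real.rpow_nonneg (norm_nonneg _) p) (by positivity)

lemma rademacherMoment_insert {a : ι} {s : Finset ι} (ha : a ∉ s) (v : E) (g : ι → E) :
    rademacherMoment p (insert a s) v g =
      (rademacherMoment p s (v + g a) g + rademacherMoment p s (v - g a) g) / 2 := by
  have hneg : ∀ T ∈ s.powerset, ‖v + ∑ i ∈ insert a s, subsetSign T i • g i‖ ^ p
      = ‖(v - g a) + ∑ i ∈ s, subsetSign T i • g i‖ ^ p := fun T hT ↦ by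
    have haT : a ∉ T := fun h ↦ ha (mem_powerset.1 hT h)
    simp only [sum_insert ha, subsetSign, haT, if_false, neg_one_smul]
    congr 2
    abel
  have hpos : ∀ T ∈ s.powerset, ‖v + ∑ i ∈ insert a s, subsetSign (insert a T) i • g i‖ ^ p
      = ‖(v + g a) + ∑ i ∈ s, subsetSign T i • g i‖ ^ p := fun T _ ↦ by
    have hs : ∀ i ∈ s, subsetSign (insert a T) i = subsetSign T i := fun i hi ↦ by
      simp [subsetSign, ne_of_mem_of_not_mem hi ha]
    rw [sum_insert ha, sum_congr rfl fun i hi ↦ by rw [hs i hi]]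
    simp only [subsetSign, mem_insert_self, if_true, one_smul, add_assoc]
  rw [rademacherMoment, rademacherMoment, rademacherMoment, sum_powerset_insert ha,
    sum_congr rfl hneg, sum_congr rfl hpos, card_insert_of_notMem ha, pow_succ]
  ring

lemma rademacherMoment_smul (t : ℝ) (s : Finset ι) (v : E) (g : ι → E) :
    rademacherMoment p s (t • v) (fun i ↦ t • g i) = |t| ^ p * rademacherMoment p s v g := by
  simp only [rademacherMoment, mul_div_assoc', mul_sum]
  congr 1
  refine sum_congr rfl fun T _ ↦ ?_
  simp_rw [smul_comm (subsetSign T _) t, ← smul_sum, ← smul_add, norm_smul, Real.norm_eq_abs]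
  exact Real.mul_rpow (abs_nonneg t) (norm_nonneg _)

lemma norm_rpow_le_rademacherMoment (hp : 1 ≤ p) (s : Finset ι) (v : E) (g : ι → E) :
    ‖v‖ ^ p ≤ rademacherMoment p s v g := by
  induction s using Finset.induction_on generalizing v with
  | empty => rw [rademacherMoment_empty]
  | insert a s ha ih =>
    rw [rademacherMoment_insert ha]
    linarith [two_mul_norm_rpow_le hp v (g a), ih (v + g a), ih (v - g a)]

lemma norm_rpow_le_rademacherMoment_of_mem (hp : 1 ≤ p) {s : Finset ι} {j : ι} (hj : j ∈ s)
    (v : E) (g : ι → E) : ‖g j‖ ^ p ≤ rademacherMoment p s v g := by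
  rw [← insert_erase hj, rademacherMoment_insert (notMem_erase j s)]
  have := two_mul_norm_rpow_le hp (g j) v
  rw [add_comm (g j) v, norm_sub_rev] at this
  linarith [norm_rpow_le_rademacherMoment hp (s.erase j) (v + g j) g,
    norm_rpow_le_rademacherMoment hp (s.erase j) (v - g j) g]

lemma rademacherMoment_add_add_sub_le (hp : 1 ≤ p) (s : Finset ι) (v u : E) (g : ι → E)
    {a b : ℝ} (ha : 0 ≤ a) (hab : a ≤ b) :
    rademacherMoment p s (v + a • u) g + rademacherMoment p s (v - a • u) g
      ≤ rademacherMoment p s (v + b • u) g + rademacherMoment p s (v - b • u) g := by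
  simp only [rademacherMoment, ← add_div, ← sum_add_distrib]
  refine div_le_div_of_nonneg_right (sum_le_sum fun T _ ↦ ?_) (by positivity)
  simpa only [add_right_comm, add_sub_right_comm] using
    norm_add_smul_rpow_add_norm_sub_smul_rpow_le hp (v + ∑ i ∈ s, subsetSign T i • g i) u ha hab

lemma rademacherMoment_le_smul (hp : 1 ≤ p) {s : Finset ι} {c : ι → ℝ}
    (hc : ∀ i ∈ s, 1 ≤ c i) (v : E) (g : ι → E) :
    rademacherMoment p s v g ≤ rademacherMoment p s v (fun i ↦ c i • g i) := by
  induction s using Finset.induction_on generalizing v with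
  | empty => simp only [rademacherMoment_empty, le_refl]
  | insert a s ha ih =>
    have hc' : ∀ i ∈ s, 1 ≤ c i := fun i hi ↦ hc i (mem_insert_of_mem hi)
    have hshift := rademacherMoment_add_add_sub_le hp s v (g a) (fun i ↦ c i • g i)
      (a := 1) zero_le_one (hc a (mem_insert_self a s))
    rw [one_smul] at hshift
    rw [rademacherMoment_insert ha, rademacherMoment_insert ha]
    linarith [ih hc' (v + g a), ih hc' (v - g a)]

lemma mul_rpow_le_rademacherMoment_of_le_norm (hp : 1 ≤ p) {s : Finset ι} {C m : ℝ}
    (hm : 0 ≤ m) (hC : ∀ u : ι → E, (∀ i ∈ s, ‖u i‖ = 1) → C ≤ rademacherMoment p s 0 u)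
    {g : ι → E} (hg : ∀ i ∈ s, m ≤ ‖g i‖) : C * m ^ p ≤ rademacherMoment p s 0 g := by
  rcases hm.eq_or_lt with rfl | hm
  · simpa [Real.zero_rpow (by linarith : p ≠ 0)] using rademacherMoment_nonneg s 0 g
  set u : ι → E := fun i ↦ ‖g i‖⁻¹ • g i
  have hu : ∀ i ∈ s, ‖u i‖ = 1 := fun i hi ↦ by
    have : ‖g i‖ ≠ 0 := (hm.trans_le (hg i hi)).ne'
    simp [u, norm_smul, this]
  have hg_eq : (fun i ↦ (‖g i‖ / m) • m • u i) = g := by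
    funext i
    rcases eq_or_ne (g i) 0 with h | h
    · simp [u, h]
    · simp only [u, smul_smul]
      have : ‖g i‖ ≠ 0 := norm_ne_zero_iff.2 h
      rw [show ‖g i‖ / m * (m * ‖g i‖⁻¹) = 1 by field_simp, one_smul]
  calc C * m ^ p ≤ m ^ p * rademacherMoment p s 0 u := by
        rw [mul_comm]; exact mul_le_mul_of_nonneg_left (hC u hu) (by positivity)
    _ = rademacherMoment p s (m • 0) (fun i ↦ m • u i) := by
        rw [rademacherMoment_smul, abs_of_pos hm]
    _ ≤ rademacherMoment p s (m • 0) (fun i ↦ (‖g i‖ / m) • m • u i) :=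
        rademacherMoment_le_smul hp (fun i hi ↦ (one_le_div hm).2 (hg i hi)) _ _
    _ = rademacherMoment p s 0 g := by rw [smul_zero, hg_eq]

theorem min_mul_sum_norm_rpow_le_card_mul_rademacherMoment (hp : 1 ≤ p) (hρ0 : 0 < ρ)
    (hρ1 : ρ < 1 / 2) {s : Finset ι} (hs : s.Nonempty)
    (hX : ∀ u : ι → E, (∀ i ∈ s, ‖u i‖ = 1) → (1 + ρ) ^ p ≤ rademacherMoment p s 0 u)
    (g : ι → E) :
    min ((1 + ρ / 2) ^ p) (1 + ρ / (3 * #s)) * ∑ i ∈ s, ‖g i‖ ^ p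
      ≤ #s * rademacherMoment p s 0 g := by
  obtain ⟨j, hj, hjmax⟩ := s.exists_max_image (‖g ·‖) hs
  obtain ⟨k, hk, hkmin⟩ := s.exists_min_image (‖g ·‖) hs
  have hsum : ∑ i ∈ s, ‖g i‖ ^ p ≤ (#s - 1) * ‖g j‖ ^ p + ‖g k‖ ^ p := by
    rw [← add_sum_erase s _ hk, add_comm]
    gcongr
    calc ∑ i ∈ s.erase k, ‖g i‖ ^ p ≤ ∑ i ∈ s.erase k, ‖g j‖ ^ p :=
          sum_le_sum fun i hi ↦
            Real.rpow_le_rpow (norm_nonneg _) (hjmax i (mem_of_mem_erase hi)) (by linarith)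
      _ = (#s - 1) * ‖g j‖ ^ p := by
          rw [sum_const, card_erase_of_mem hk, nsmul_eq_mul, Nat.cast_pred hs.card_pos]
  exact min_mul_le_of_le_max_min hp hρ0 hρ1 (by exact_mod_cast hs.card_pos)
    (sum_nonneg fun i _ ↦ by positivity) (by positivity) hsum
    (Real.rpow_le_rpow (norm_nonneg _) (hkmin j hj) (by linarith))
    (norm_rpow_le_rademacherMoment_of_mem hp hj 0 g)
    (mul_rpow_le_rademacherMoment_of_le_norm hp (norm_nonneg _) hX hkmin)

end RademacherMoment

section Rademacher

variable {ι : Type*} {Ω : Type*} [MeasurableSpace Ω] {P : Measure Ω} {r : ι → Ω → ℝ}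

lemma forall_eq_subsetSign_iff [DecidableEq ι] {s T : Finset ι} (hT : T ⊆ s) {x : ι → ℝ}
    (hx : ∀ i ∈ s, x i = 1 ∨ x i = -1) :
    (∀ i ∈ s, x i = subsetSign T i) ↔ T = s.filter (x · = 1) := by
  constructor
  · intro h
    ext i
    simp only [mem_filter]
    by_cases hiT : i ∈ T
    · simp [hiT, hT hiT, h i (hT hiT), subsetSign]
    · simp only [hiT, false_iff, not_and]
      intro hi
      rw [h i hi]
      norm_num [subsetSign, hiT]
  · rintro rfl i hi
    rcases hx i hi with h | h <;> simp [subsetSign, hi, h]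

variable (hmeas : ∀ i, Measurable (r i))
  (hdist : ∀ i, P.map (r i) = (2 : ENNReal)⁻¹ • (Measure.dirac 1 + Measure.dirac (-1)))
include hmeas hdist

lemma ae_eq_one_or_eq_neg_one (i : ι) : ∀ᵐ ω ∂P, r i ω = 1 ∨ r i ω = -1 := by
  have : ∀ᵐ x ∂P.map (r i), x = 1 ∨ x = -1 := by
    rw [hdist i]
    refine Measure.ae_smul_measure (ae_add_measure_iff.2 ⟨?_, ?_⟩) _ <;> simp
  exact ae_of_ae_map (hmeas i).aemeasurable this

variable [DecidableEq ι]

lemma measure_preimage_subsetSign (T : Finset ι) (i : ι) :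
    P (r i ⁻¹' {subsetSign T i}) = 2⁻¹ := by
  rw [← Measure.map_apply (hmeas i) (measurableSet_singleton _), hdist i]
  by_cases hi : i ∈ T <;> norm_num [subsetSign, hi, Pi.single_apply]

variable (hindep : iIndepFun (m := fun _ ↦ Real.measurableSpace) r P)
include hindep

lemma measure_biInter_preimage_subsetSign (s T : Finset ι) :
    P (⋂ i ∈ s, r i ⁻¹' {subsetSign T i}) = 2⁻¹ ^ #s := by
  rw [hindep.measure_inter_preimage_eq_mul s fun i _ ↦ measurableSet_singleton _,
    prod_congr rfl fun i _ ↦ measure_preimage_subsetSign hmeas hdist T i, prod_const]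

theorem integral_comp_sum_rademacher [IsFiniteMeasure P] {E : Type*} [AddCommMonoid E]
    [Module ℝ E] (F : E → ℝ) (s : Finset ι) (g : ι → E) :
    ∫ ω, F (∑ i ∈ s, r i ω • g i) ∂P
      = (∑ T ∈ s.powerset, F (∑ i ∈ s, subsetSign T i • g i)) / 2 ^ #s := by
  set A : Finset ι → Set Ω := fun T ↦ ⋂ i ∈ s, r i ⁻¹' {subsetSign T i}
  have hA : ∀ T, MeasurableSet (A T) := fun T ↦
    s.measurableSet_biInter fun i _ ↦ hmeas i (measurableSet_singleton _)
  have hae : (fun ω ↦ F (∑ i ∈ s, r i ω • g i)) =ᵐ[P]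
      fun ω ↦ ∑ T ∈ s.powerset,
        (A T).indicator (fun _ ↦ F (∑ i ∈ s, subsetSign T i • g i)) ω := by
    filter_upwards [(Filter.eventually_all_finset s).2 fun i _ ↦
      ae_eq_one_or_eq_neg_one hmeas hdist i] with ω hω
    have hmemA : ∀ T ∈ s.powerset, ω ∈ A T ↔ T = s.filter (r · ω = 1) := fun T hT ↦ by
      simpa [A] using forall_eq_subsetSign_iff (mem_powerset.1 hT) hω
    set T₀ := s.filter (r · ω = 1)
    have hT₀ : T₀ ∈ s.powerset := mem_powerset.2 (filter_subset _ s)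
    rw [sum_eq_single_of_mem T₀ hT₀ fun T hT hne ↦ Set.indicator_of_notMem
      (fun h ↦ hne ((hmemA T hT).1 h)) _, Set.indicator_of_mem ((hmemA T₀ hT₀).2 rfl)]
    have hsign : ∀ i ∈ s, r i ω = subsetSign T₀ i := by
      simpa [A] using (hmemA T₀ hT₀).2 rfl
    exact congrArg F (sum_congr rfl fun i hi ↦ by rw [hsign i hi])
  rw [integral_congr_ae hae,
    integral_finsetSum _ fun T _ ↦ (integrable_const _).indicator (hA T)]
  simp only [integral_indicator_const _ (hA _), measureReal_def,
    measure_biInter_preimage_subsetSign hmeas hdist hindep, A, sum_div]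
  refine sum_congr rfl fun T _ ↦ ?_
  simp [div_eq_inv_mul]

lemma integral_norm_sum_rademacher_rpow [IsFiniteMeasure P] {E : Type*} [NormedAddCommGroup E]
    [NormedSpace ℝ E] (p : ℝ) (s : Finset ι) (g : ι → E) :
    ∫ ω, ‖∑ i ∈ s, r i ω • g i‖ ^ p ∂P = rademacherMoment p s 0 g := by
  simpa only [rademacherMoment, zero_add] using
    integral_comp_sum_rademacher hmeas hdist hindep (‖·‖ ^ p) s g

end Rademacher

namespace MeasureTheory.Lp

variable {M : Type*} [MeasurableSpace M] {μ : Measure M} {X : Type*} [NormedAddCommGroup X]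
  [NormedSpace ℝ X] {ι : Type*}

lemma coeFn_sum_smul {q : ENNReal} (s : Finset ι) (c : ι → ℝ) (f : ι → Lp X q μ) :
    ⇑(∑ i ∈ s, c i • f i) =ᵐ[μ] fun w ↦ ∑ i ∈ s, c i • f i w := by
  filter_upwards [coeFn_fun_finsetSum s (fun i ↦ c i • f i),
    (Filter.eventually_all_finset s).2 fun i _ ↦ coeFn_smul (c i) (f i)] with w hsum hsmul
  exact hsum.trans (sum_congr rfl hsmul)

variable {p : ℝ} [hp : Fact (1 ≤ ENNReal.ofReal p)]

omit [NormedSpace ℝ X] in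
lemma integrable_norm_rpow (F : Lp X (ENNReal.ofReal p) μ) :
    Integrable (fun w ↦ ‖F w‖ ^ p) μ := by
  have hp0 : 0 < p := zero_lt_one.trans_le (ENNReal.one_le_ofReal.1 hp.out)
  simpa [hp0.le] using (Lp.memLp F).integrable_norm_rpow (by simpa using hp0)
    ENNReal.ofReal_ne_top

omit [NormedSpace ℝ X] in
lemma norm_rpow_eq_integral (F : Lp X (ENNReal.ofReal p) μ) :
    ‖F‖ ^ p = ∫ w, ‖F w‖ ^ p ∂μ := by
  have hp0 : 0 < p := zero_lt_one.trans_le (ENNReal.one_le_ofReal.1 hp.out)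
  rw [Lp.norm_def, (Lp.memLp F).eLpNorm_eq_integral_rpow_norm (by simpa using hp0)
    ENNReal.ofReal_ne_top, ENNReal.toReal_ofReal hp0.le, ENNReal.toReal_ofReal (by positivity)]
  exact Real.rpow_inv_rpow (integral_nonneg fun w ↦ by positivity) hp0.ne'

lemma integrable_norm_sum_smul_rpow (s : Finset ι) (c : ι → ℝ)
    (f : ι → Lp X (ENNReal.ofReal p) μ) :
    Integrable (fun w ↦ ‖∑ i ∈ s, c i • f i w‖ ^ p) μ :=
  (integrable_norm_rpow _).congr <| (coeFn_sum_smul s c f).fun_comp (‖·‖ ^ p)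

lemma norm_sum_smul_rpow_eq_integral (s : Finset ι) (c : ι → ℝ)
    (f : ι → Lp X (ENNReal.ofReal p) μ) :
    ‖∑ i ∈ s, c i • f i‖ ^ p = ∫ w, ‖∑ i ∈ s, c i • f i w‖ ^ p ∂μ := by
  rw [norm_rpow_eq_integral]
  exact integral_congr_ae <| (coeFn_sum_smul s c f).fun_comp (‖·‖ ^ p)

variable [DecidableEq ι]

lemma rademacherMoment_eq_integral (s : Finset ι) (f : ι → Lp X (ENNReal.ofReal p) μ) :
    rademacherMoment p s 0 f = ∫ w, rademacherMoment p s 0 (f · w) ∂μ := by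
  simp only [rademacherMoment, zero_add, integral_div]
  rw [integral_finsetSum _ fun T _ ↦ integrable_norm_sum_smul_rpow s _ f]
  simp only [norm_sum_smul_rpow_eq_integral]

lemma integrable_rademacherMoment (s : Finset ι) (f : ι → Lp X (ENNReal.ofReal p) μ) :
    Integrable (fun w ↦ rademacherMoment p s 0 (f · w)) μ := by
  simp only [rademacherMoment, zero_add]
  exact (integrable_finsetSum _ fun T _ ↦ integrable_norm_sum_smul_rpow s _ f).div_const _

theorem mul_sum_norm_rpow_le_mul_rademacherMoment {s : Finset ι} {a b : ℝ}
    (h : ∀ g : ι → X, a * ∑ i ∈ s, ‖g i‖ ^ p ≤ b * rademacherMoment p s 0 g)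
    (f : ι → Lp X (ENNReal.ofReal p) μ) :
    a * ∑ i ∈ s, ‖f i‖ ^ p ≤ b * rademacherMoment p s 0 f := by
  simp only [norm_rpow_eq_integral (f _)]
  rw [rademacherMoment_eq_integral, ← integral_finsetSum _ fun i _ ↦ integrable_norm_rpow _,
    ← integral_const_mul, ← integral_const_mul]
  exact integral_mono ((integrable_finsetSum _ fun i _ ↦ integrable_norm_rpow _).const_mul a)
    ((integrable_rademacherMoment s f).const_mul b) fun w ↦ h (f · w)

end MeasureTheory.Lp

theorem stmt9_general {Ω : Type*} [MeasurableSpace Ω] (P : Measure Ω) [IsProbabilityMeasure P]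
    {X : Type*} [NormedAddCommGroup X] [NormedSpace ℝ X]
    {M : Type*} [MeasurableSpace M] (μ : Measure M)
    (p : ℝ) (hp : 1 < p) [Fact (1 ≤ ENNReal.ofReal p)]
    (n : ℕ) (hn : 2 ≤ n)
    (r : ℕ → Ω → ℝ) (hmeas : ∀ i, Measurable (r i))
    (hindep : iIndepFun (m := fun _ => Real.measurableSpace) r P)
    (hdist : ∀ i, Measure.map (r i) P
      = (2 : ENNReal)⁻¹ • (Measure.dirac (1 : ℝ) + Measure.dirac (-1 : ℝ)))
    (ρ : ℝ) (hρ0 : 0 < ρ) (hρ1 : ρ < 1 / 2)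
    (hX : ∀ x : ℕ → X, (∀ i ∈ Finset.Icc 1 n, ‖x i‖ = 1) →
      (1 + ρ) ^ p ≤ ∫ ω, ‖∑ i ∈ Finset.Icc 1 n, r i ω • x i‖ ^ p ∂P)
    (f : ℕ → Lp X (ENNReal.ofReal p) μ) (hf : ∀ i ∈ Finset.Icc 1 n, ‖f i‖ = 1) :
    min ((1 + ρ / 2) ^ p) (1 + ρ / (3 * n))
      ≤ ∫ ω, ‖∑ i ∈ Finset.Icc 1 n, r i ω • f i‖ ^ p ∂P := by
  set s := Icc 1 n
  have hcard : #s = n := by simp [s]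
  have hXs : ∀ u : ℕ → X, (∀ i ∈ s, ‖u i‖ = 1) → (1 + ρ) ^ p ≤ rademacherMoment p s 0 u :=
    fun u hu ↦ by simpa only [integral_norm_sum_rademacher_rpow hmeas hdist hindep] using hX u hu
  have hpointwise := min_mul_sum_norm_rpow_le_card_mul_rademacherMoment hp.le hρ0 hρ1
    (nonempty_Icc.2 (by omega)) hXs
  rw [hcard] at hpointwise
  have hLp := Lp.mul_sum_norm_rpow_le_mul_rademacherMoment hpointwise f
  rw [sum_congr rfl fun i hi ↦ by rw [hf i hi, Real.one_rpow], sum_const, hcard, nsmul_one,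
    mul_comm] at hLp
  rw [integral_norm_sum_rademacher_rpow hmeas hdist hindep]
  exact le_of_mul_le_mul_left hLp (by exact_mod_cast (by omega : 0 < n))

theorem stmt9 {Ω : Type*} [MeasurableSpace Ω] (P : Measure Ω) [IsProbabilityMeasure P]
    {X : Type*} [NormedAddCommGroup X] [NormedSpace ℝ X] [CompleteSpace X]
    {M : Type*} [MeasurableSpace M] (μ : Measure M)
    (p : ℝ) (hp : 1 < p) [Fact (1 ≤ ENNReal.ofReal p)]
    (n : ℕ) (hn : 2 ≤ n)
    (r : ℕ → Ω → ℝ) (hmeas : ∀ i, Measurable (r i))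
    (hindep : iIndepFun (m := fun _ => Real.measurableSpace) r P)
    (hdist : ∀ i, Measure.map (r i) P
      = (2 : ENNReal)⁻¹ • (Measure.dirac (1 : ℝ) + Measure.dirac (-1 : ℝ)))
    (ρ : ℝ) (hρ0 : 0 < ρ) (hρ1 : ρ < 1 / 2)
    (hX : ∀ x : ℕ → X, (∀ i ∈ Finset.Icc 1 n, ‖x i‖ = 1) →
      (1 + ρ) ^ p ≤ ∫ ω, ‖∑ i ∈ Finset.Icc 1 n, r i ω • x i‖ ^ p ∂P)
    (f : ℕ → Lp X (ENNReal.ofReal p) μ) (hf : ∀ i ∈ Finset.Icc 1 n, ‖f i‖ = 1) :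
    min ((1 + ρ / 2) ^ p) (1 + ρ / (3 * n))
      ≤ ∫ ω, ‖∑ i ∈ Finset.Icc 1 n, r i ω • f i‖ ^ p ∂P :=
  stmt9_general P μ p hp n hn r hmeas hindep hdist ρ hρ0 hρ1 hX f hf
end

section
/- Let X be a real Banach space, φ a strictly convex increasing function on [0,∞) with φ(0)=0, and r a symmetric random variable with ‖r‖_∞ = 1. A point x ∈ S_X is a strongly extreme point of B_X if and only if for every ε > 0 there exists δ > 0 such that ‖y‖ ≥ ε implies E[φ(‖x + r y‖)] ≥ φ(1) + δ. -/
/-!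
Since `‖x‖ = 1`, the norms `a = ‖x + z‖` and `b = ‖x - z‖` satisfy `a + b ≥ 2`. For convex
increasing `φ` this gives `φ a + φ b ≥ 2 φ 1`, and if moreover `max a b ≥ 1 + δ` then
`(1 - δ, 1 + δ)` is majorized by `(a, b)` (after pushing them inwards by monotonicity), so
`φ a + φ b ≥ φ (1 - δ) + φ (1 + δ) > 2 φ 1` by strict convexity. Applied to `z = r y`, strong
extremality gives this gap on the event `|r| ≥ 1/2`, which has positive probability because
`‖r‖_∞ = 1`, and symmetry of `r` gives `2 E φ ‖x + r y‖ = E (φ ‖x + r y‖ + φ ‖x - r y‖)`.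

Conversely, `t ↦ ‖x + t y‖` is convex, so `‖x + r y‖ ≤ max ‖x ± y‖` whenever `|r| ≤ 1`, and
continuity of `φ` at `1` turns a gap in expectation into a gap for `max ‖x ± y‖`.
-/

open MeasureTheory Set

section NormedSpace

variable {X : Type*} [NormedAddCommGroup X] [NormedSpace ℝ X]

/-- For `‖x‖ = 1` this says that `x` is a strongly extreme point of the closed unit ball. -/
def IsStronglyExtreme (x : X) : Prop :=
  ∀ ε : ℝ, 0 < ε → ∃ δ : ℝ, 0 < δ ∧ ∀ y : X, ε ≤ ‖y‖ → 1 + δ ≤ max ‖x + y‖ ‖x - y‖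

lemma norm_add_smul_le_max (x y : X) {t : ℝ} (ht : |t| ≤ 1) :
    ‖x + t • y‖ ≤ max ‖x - y‖ ‖x + y‖ := by
  obtain ⟨ht₁, ht₂⟩ := abs_le.1 ht
  have hseg : x + t • y ∈ segment ℝ (x - y) (x + y) :=
    ⟨(1 - t) / 2, (1 + t) / 2, by linarith, by linarith, by ring, by module⟩
  exact (convexOn_norm convex_univ).le_max_of_mem_segment (mem_univ _) (mem_univ _) hseg

lemma two_le_norm_add_add_norm_sub {x : X} (hx : ‖x‖ = 1) (z : X) :
    2 ≤ ‖x + z‖ + ‖x - z‖ := by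
  have hsum : (x + z) + (x - z) = (2 : ℝ) • x := by module
  calc (2 : ℝ) = ‖(x + z) + (x - z)‖ := by rw [hsum, norm_smul, hx]; norm_num
    _ ≤ ‖x + z‖ + ‖x - z‖ := norm_add_le _ _

end NormedSpace

section ConvexFunction

variable {φ : ℝ → ℝ}

lemma ConvexOn.map_add_map_le_of_add_eq {s : Set ℝ} (hφ : ConvexOn ℝ s φ) {u v p q : ℝ}
    (hu : u ∈ s) (hv : v ∈ s) (hup : u ≤ p) (hpv : p ≤ v) (hsum : p + q = u + v) :
    φ p + φ q ≤ φ u + φ v := by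
  rcases hup.eq_or_lt with rfl | hup
  · obtain rfl : q = v := by linarith
    rfl
  set θ := (v - p) / (v - u) with hθ
  have hvu : 0 < v - u := by linarith
  have hθ₀ : 0 ≤ θ := div_nonneg (by linarith) hvu.le
  have hθ₁ : 0 ≤ 1 - θ := by
    rw [sub_nonneg, div_le_one hvu]; linarith
  have hp : θ • u + (1 - θ) • v = p := by
    simp only [smul_eq_mul, hθ]; field_simp; ring
  have hq : (1 - θ) • u + θ • v = q := by
    rw [show q = u + v - p by linarith]; simp only [smul_eq_mul, hθ]; field_simp; ring
  have h₁ := hφ.2 hu hv hθ₀ hθ₁ (add_sub_cancel θ 1)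
  have h₂ := hφ.2 hu hv hθ₁ hθ₀ (sub_add_cancel 1 θ)
  rw [hp] at h₁
  rw [hq] at h₂
  simp only [smul_eq_mul] at h₁ h₂
  linarith

lemma StrictConvexOn.two_mul_lt_map_sub_add_map_add {s : Set ℝ} (hφ : StrictConvexOn ℝ s φ)
    {a δ : ℝ} (h₁ : a - δ ∈ s) (h₂ : a + δ ∈ s) (hδ : 0 < δ) :
    2 * φ a < φ (a - δ) + φ (a + δ) := by
  have h := hφ.2 h₁ h₂ (by linarith) one_half_pos one_half_pos (add_halves 1)
  have hmid : (1 / 2 : ℝ) • (a - δ) + (1 / 2 : ℝ) • (a + δ) = a := by module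
  rw [hmid] at h
  simp only [smul_eq_mul] at h
  linarith

lemma ConvexOn.map_one_sub_add_map_one_add_le (hφ : ConvexOn ℝ (Ici 0) φ)
    (hφm : MonotoneOn φ (Ici 0)) {δ a b : ℝ} (hδ₀ : 0 ≤ δ) (hδ₁ : δ ≤ 1) (ha : 0 ≤ a)
    (hb : 0 ≤ b) (hab : 2 ≤ a + b) (hmax : 1 + δ ≤ max a b) :
    φ (1 - δ) + φ (1 + δ) ≤ φ a + φ b := by
  wlog hba : b ≤ a generalizing a b
  · rw [add_comm (φ a)]
    exact this hb ha (by linarith) (by rwa [max_comm]) (by linarith)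
  rw [max_eq_left hba] at hmax
  -- Push `a` and `b` inwards to `v` and `2 - v`, which enclose `1 ± δ`.
  set v := min a 2 with hv
  have hv₂ : v ≤ 2 := min_le_right a 2
  have hv₁ : 1 + δ ≤ v := le_min hmax (by linarith)
  have hv₀ : v ∈ Ici 0 := mem_Ici.2 (by linarith)
  have hu₀ : 2 - v ∈ Ici 0 := mem_Ici.2 (by linarith)
  have hvb : 2 - v ≤ b := by rcases min_choice a 2 with h | h <;> rw [hv, h] <;> linarith
  have hmaj := hφ.map_add_map_le_of_add_eq (u := 2 - v) (v := v) (p := 1 - δ) (q := 1 + δ)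
    hu₀ hv₀ (by linarith) (by linarith) (by ring)
  have hφb : φ (2 - v) ≤ φ b := hφm hu₀ hb hvb
  have hφa : φ v ≤ φ a := hφm hv₀ ha (min_le_left a 2)
  linarith

lemma MonotoneOn.measurable_comp {α : Type*} [MeasurableSpace α]
    (hφ : MonotoneOn φ (Ici 0)) {g : α → ℝ} (hg : Measurable g) (hg₀ : ∀ a, 0 ≤ g a) :
    Measurable fun a => φ (g a) := by
  have hmono : Monotone fun t => φ (max t 0) := fun s t hst =>
    hφ (le_max_right s 0) (le_max_right t 0) (max_le_max_right 0 hst)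
  have hcomp : (fun a => φ (g a)) = (fun t => φ (max t 0)) ∘ g :=
    funext fun a => by rw [Function.comp_apply, max_eq_left (hg₀ a)]
  exact hcomp ▸ hmono.measurable.comp hg

end ConvexFunction

section Probability

variable {Ω : Type*} [MeasurableSpace Ω] {P : Measure Ω} {r : Ω → ℝ}

lemma ae_abs_le_one_of_eLpNorm_top_le_one (h : eLpNorm r ⊤ P ≤ 1) : ∀ᵐ ω ∂P, |r ω| ≤ 1 := by
  filter_upwards [ae_le_eLpNormEssSup (f := r) (μ := P)] with ω hω
  rw [← eLpNorm_exponent_top] at hω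
  simpa [← ofReal_norm, Real.norm_eq_abs] using hω.trans h

lemma measure_le_abs_ne_zero {t : ℝ} (ht : ENNReal.ofReal t < eLpNorm r ⊤ P) :
    P {ω | t ≤ |r ω|} ≠ 0 := by
  intro h0
  have hbound : ∀ᵐ ω ∂P, ‖r ω‖ ≤ t := by
    filter_upwards [measure_eq_zero_iff_ae_notMem.1 h0] with ω hω
    simpa [Real.norm_eq_abs] using (not_le.1 hω).le
  have := eLpNormEssSup_le_of_ae_bound hbound
  rw [← eLpNorm_exponent_top] at this
  exact ht.not_ge this

lemma integral_comp_eq_integral_comp_neg {E : Type*} [NormedAddCommGroup E] [NormedSpace ℝ E]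
    (hr : AEMeasurable r P) (hsymm : P.map r = P.map (fun ω => -r ω)) {f : ℝ → E}
    (hf : AEStronglyMeasurable f (P.map r)) :
    ∫ ω, f (r ω) ∂P = ∫ ω, f (-r ω) ∂P := by
  rw [← integral_map hr hf, hsymm, integral_map (φ := fun ω => -r ω) hr.neg (hsymm ▸ hf)]

end Probability

section StronglyExtreme

variable {Ω : Type*} [MeasurableSpace Ω] {P : Measure Ω} {r : Ω → ℝ}
  {X : Type*} [NormedAddCommGroup X] [NormedSpace ℝ X] {φ : ℝ → ℝ}

lemma map_one_sub_add_map_one_add_le_map_norm_add_add_map_norm_sub (hφ : ConvexOn ℝ (Ici 0) φ)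
    (hφm : MonotoneOn φ (Ici 0)) {x : X} (hx : ‖x‖ = 1) {δ : ℝ} (hδ₀ : 0 ≤ δ) (hδ₁ : δ ≤ 1)
    {z : X} (hz : 1 + δ ≤ max ‖x + z‖ ‖x - z‖) :
    φ (1 - δ) + φ (1 + δ) ≤ φ ‖x + z‖ + φ ‖x - z‖ :=
  hφ.map_one_sub_add_map_one_add_le hφm hδ₀ hδ₁ (norm_nonneg _) (norm_nonneg _)
    (two_le_norm_add_add_norm_sub hx z) hz

lemma two_mul_map_one_le_map_norm_add_add_map_norm_sub (hφ : ConvexOn ℝ (Ici 0) φ)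
    (hφm : MonotoneOn φ (Ici 0)) {x : X} (hx : ‖x‖ = 1) (z : X) :
    2 * φ 1 ≤ φ ‖x + z‖ + φ ‖x - z‖ := by
  have hz : 1 + 0 ≤ max ‖x + z‖ ‖x - z‖ := by
    linarith [two_le_norm_add_add_norm_sub hx z, le_max_left ‖x + z‖ ‖x - z‖,
      le_max_right ‖x + z‖ ‖x - z‖]
  have := map_one_sub_add_map_one_add_le_map_norm_add_add_map_norm_sub hφ hφm hx le_rfl
    zero_le_one hz
  rwa [sub_zero, add_zero, ← two_mul] at this

lemma measurable_map_norm_add_smul (hφm : MonotoneOn φ (Ici 0)) (x y : X) :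
    Measurable fun t : ℝ => φ ‖x + t • y‖ :=
  hφm.measurable_comp (by fun_prop : Continuous fun t : ℝ => ‖x + t • y‖).measurable
    fun _ => norm_nonneg _

lemma integrable_map_norm_add_smul [IsFiniteMeasure P] (hr : Measurable r)
    (hr₁ : ∀ᵐ ω ∂P, |r ω| ≤ 1) (hφm : MonotoneOn φ (Ici 0)) (x y : X) :
    Integrable (fun ω => φ ‖x + r ω • y‖) P := by
  refine (memLp_of_bounded (a := φ 0) (b := φ (‖x‖ + ‖y‖)) ?_
    ((measurable_map_norm_add_smul hφm x y).comp hr).aestronglyMeasurable 1).integrable le_rfl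
  filter_upwards [hr₁] with ω hω
  have hle : ‖x + r ω • y‖ ≤ ‖x‖ + ‖y‖ := calc
    ‖x + r ω • y‖ ≤ ‖x‖ + |r ω| * ‖y‖ := by
      rw [← Real.norm_eq_abs, ← norm_smul]; exact norm_add_le _ _
    _ ≤ ‖x‖ + ‖y‖ := by gcongr; nlinarith [norm_nonneg y]
  exact ⟨hφm (le_refl (0 : ℝ)) (norm_nonneg _) (norm_nonneg _),
    hφm (norm_nonneg _) (add_nonneg (norm_nonneg x) (norm_nonneg y)) hle⟩

lemma integrable_map_norm_sub_smul [IsFiniteMeasure P] (hr : Measurable r)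
    (hr₁ : ∀ᵐ ω ∂P, |r ω| ≤ 1) (hφm : MonotoneOn φ (Ici 0)) (x y : X) :
    Integrable (fun ω => φ ‖x - r ω • y‖) P := by
  simpa only [smul_neg, ← sub_eq_add_neg] using integrable_map_norm_add_smul hr hr₁ hφm x (-y)

lemma integral_map_norm_add_smul_add_map_norm_sub_smul [IsFiniteMeasure P] (hr : Measurable r)
    (hsymm : P.map r = P.map (fun ω => -r ω)) (hr₁ : ∀ᵐ ω ∂P, |r ω| ≤ 1)
    (hφm : MonotoneOn φ (Ici 0)) (x y : X) :
    ∫ ω, (φ ‖x + r ω • y‖ + φ ‖x - r ω • y‖) ∂P = 2 * ∫ ω, φ ‖x + r ω • y‖ ∂P := by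
  have hsym : ∫ ω, φ ‖x - r ω • y‖ ∂P = ∫ ω, φ ‖x + r ω • y‖ ∂P := by
    simpa only [neg_smul, ← sub_eq_add_neg] using (integral_comp_eq_integral_comp_neg
      hr.aemeasurable hsymm (measurable_map_norm_add_smul hφm x y).aestronglyMeasurable).symm
  rw [integral_add (integrable_map_norm_add_smul hr hr₁ hφm x y)
    (integrable_map_norm_sub_smul hr hr₁ hφm x y), hsym, two_mul]

lemma exists_add_le_integral_of_isStronglyExtreme [IsProbabilityMeasure P] (hr : Measurable r)
    (hsymm : P.map r = P.map (fun ω => -r ω)) (hnorm : eLpNorm r ⊤ P = 1)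
    (hφ : StrictConvexOn ℝ (Ici 0) φ) (hφm : MonotoneOn φ (Ici 0)) {x : X} (hx : ‖x‖ = 1)
    (hext : IsStronglyExtreme x) {ε : ℝ} (hε : 0 < ε) :
    ∃ δ : ℝ, 0 < δ ∧ ∀ y : X, ε ≤ ‖y‖ → φ 1 + δ ≤ ∫ ω, φ ‖x + r ω • y‖ ∂P := by
  have hr₁ := ae_abs_le_one_of_eLpNorm_top_le_one hnorm.le
  obtain ⟨δ₀, hδ₀, hmax⟩ := hext (ε / 2) (half_pos hε)
  set δ := min δ₀ 1
  have hδ : 0 < δ := lt_min hδ₀ one_pos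
  set c := φ (1 - δ) + φ (1 + δ) - 2 * φ 1
  have hc : 0 < c := sub_pos.2 <| hφ.two_mul_lt_map_sub_add_map_add
    (mem_Ici.2 (by linarith [min_le_right δ₀ 1])) (mem_Ici.2 (by linarith)) hδ
  set B := {ω | 1 / 2 ≤ |r ω|}
  have hB : MeasurableSet B := measurableSet_le measurable_const hr.abs
  have hPB : 0 < P.real B := ENNReal.toReal_pos
    (measure_le_abs_ne_zero (by rw [hnorm]; exact ENNReal.ofReal_lt_one.2 one_half_lt_one))
    (measure_ne_top P B)
  refine ⟨c / 2 * P.real B, by positivity, fun y hy => ?_⟩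
  have hpt : ∀ᵐ ω ∂P, 2 * φ 1 + B.indicator (fun _ => c) ω
      ≤ φ ‖x + r ω • y‖ + φ ‖x - r ω • y‖ := by
    filter_upwards with ω
    by_cases hω : ω ∈ B
    · have hry : ε / 2 ≤ ‖r ω • y‖ := by
        rw [norm_smul, Real.norm_eq_abs]
        nlinarith [show (1 : ℝ) / 2 ≤ |r ω| from hω]
      rw [indicator_of_mem hω]
      linarith [map_one_sub_add_map_one_add_le_map_norm_add_add_map_norm_sub hφ.convexOn hφm hx
        hδ.le (min_le_right _ _) (by linarith [min_le_left δ₀ 1, hmax _ hry] :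
          1 + δ ≤ max ‖x + r ω • y‖ ‖x - r ω • y‖)]
    · rw [indicator_of_notMem hω, add_zero]
      exact two_mul_map_one_le_map_norm_add_add_map_norm_sub hφ.convexOn hφm hx _
  have hind : Integrable (B.indicator fun _ => c) P := (integrable_const c).indicator hB
  suffices 2 * (φ 1 + c / 2 * P.real B) ≤ 2 * ∫ ω, φ ‖x + r ω • y‖ ∂P by linarith
  calc 2 * (φ 1 + c / 2 * P.real B) = ∫ ω, (2 * φ 1 + B.indicator (fun _ => c) ω) ∂P := by
        rw [integral_add (integrable_const _) hind, integral_const, integral_indicator_const c hB,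
          probReal_univ, smul_eq_mul, smul_eq_mul]
        ring
    _ ≤ ∫ ω, (φ ‖x + r ω • y‖ + φ ‖x - r ω • y‖) ∂P :=
        integral_mono_ae ((integrable_const _).add hind)
          ((integrable_map_norm_add_smul hr hr₁ hφm x y).add
            (integrable_map_norm_sub_smul hr hr₁ hφm x y)) hpt
    _ = 2 * ∫ ω, φ ‖x + r ω • y‖ ∂P :=
        integral_map_norm_add_smul_add_map_norm_sub_smul hr hsymm hr₁ hφm x y

lemma ConvexOn.exists_map_one_add_lt (hφ : ConvexOn ℝ (Ici 0) φ) {δ : ℝ} (hδ : 0 < δ) :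
    ∃ η : ℝ, 0 < η ∧ φ (1 + η) < φ 1 + δ := by
  have hcont : ContinuousAt φ 1 := hφ.continuousOn_interior.continuousAt
    (by rw [interior_Ici]; exact Ioi_mem_nhds one_pos)
  have hev : ∀ᶠ t in nhdsWithin 1 (Ioi 1), 1 < t ∧ φ t < φ 1 + δ :=
    eventually_mem_nhdsWithin.and (nhdsWithin_le_nhds
      (hcont.eventually (gt_mem_nhds (lt_add_of_pos_right _ hδ))))
  obtain ⟨t, ht, hφt⟩ := hev.exists
  exact ⟨t - 1, sub_pos.2 ht, by rwa [add_sub_cancel]⟩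

lemma isStronglyExtreme_of_add_le_integral [IsProbabilityMeasure P] (hr : Measurable r)
    (hr₁ : ∀ᵐ ω ∂P, |r ω| ≤ 1) (hφ : ConvexOn ℝ (Ici 0) φ) (hφm : MonotoneOn φ (Ici 0)) {x : X}
    (h : ∀ ε : ℝ, 0 < ε → ∃ δ : ℝ, 0 < δ ∧
      ∀ y : X, ε ≤ ‖y‖ → φ 1 + δ ≤ ∫ ω, φ ‖x + r ω • y‖ ∂P) :
    IsStronglyExtreme x := by
  intro ε hε
  obtain ⟨δ, hδ, hint⟩ := h ε hε
  obtain ⟨η, hη, hφη⟩ := hφ.exists_map_one_add_lt hδ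
  refine ⟨η, hη, fun y hy => ?_⟩
  by_contra! hlt
  have hup : ∫ ω, φ ‖x + r ω • y‖ ∂P ≤ ∫ _, φ (1 + η) ∂P := by
    refine integral_mono_ae (integrable_map_norm_add_smul hr hr₁ hφm x y) (integrable_const _) ?_
    filter_upwards [hr₁] with ω hω
    refine hφm (norm_nonneg _) (by linarith : (0 : ℝ) ≤ 1 + η) ?_
    exact (norm_add_smul_le_max x y hω).trans (by rw [max_comm]; exact hlt.le)
  rw [integral_const, probReal_univ, one_smul] at hup
  linarith [hint y hy]

end StronglyExtreme

theorem stmt11_general {Ω : Type*} [MeasurableSpace Ω] (P : Measure Ω) [IsProbabilityMeasure P]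
    {X : Type*} [NormedAddCommGroup X] [NormedSpace ℝ X]
    (r : Ω → ℝ) (hmeas : Measurable r)
    (hsymm : Measure.map r P = Measure.map (fun ω => -(r ω)) P)
    (hnorm : eLpNorm r ⊤ P = 1)
    (φ : ℝ → ℝ) (hφ : StrictConvexOn ℝ (Set.Ici 0) φ)
    (hφm : MonotoneOn φ (Set.Ici 0))
    (x : X) (hx : ‖x‖ = 1) :
    (∀ ε : ℝ, 0 < ε → ∃ δ : ℝ, 0 < δ ∧
        ∀ y : X, ε ≤ ‖y‖ → 1 + δ ≤ max ‖x + y‖ ‖x - y‖) ↔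
      (∀ ε : ℝ, 0 < ε → ∃ δ : ℝ, 0 < δ ∧
        ∀ y : X, ε ≤ ‖y‖ → φ 1 + δ ≤ ∫ ω, φ ‖x + r ω • y‖ ∂P) :=
  ⟨fun hext _ hε =>
    exists_add_le_integral_of_isStronglyExtreme hmeas hsymm hnorm hφ hφm hx hext hε,
    isStronglyExtreme_of_add_le_integral hmeas (ae_abs_le_one_of_eLpNorm_top_le_one hnorm.le)
      hφ.convexOn hφm⟩

theorem stmt11 {Ω : Type*} [MeasurableSpace Ω] (P : Measure Ω) [IsProbabilityMeasure P]
    {X : Type*} [NormedAddCommGroup X] [NormedSpace ℝ X]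
    (r : Ω → ℝ) (hmeas : Measurable r)
    (hsymm : Measure.map r P = Measure.map (fun ω => -(r ω)) P)
    (hnorm : eLpNorm r ⊤ P = 1)
    (φ : ℝ → ℝ) (hφ : StrictConvexOn ℝ (Set.Ici 0) φ)
    (hφm : MonotoneOn φ (Set.Ici 0)) (hφ0 : φ 0 = 0)
    (x : X) (hx : ‖x‖ = 1) :
    (∀ ε : ℝ, 0 < ε → ∃ δ : ℝ, 0 < δ ∧
        ∀ y : X, ε ≤ ‖y‖ → 1 + δ ≤ max ‖x + y‖ ‖x - y‖) ↔
      (∀ ε : ℝ, 0 < ε → ∃ δ : ℝ, 0 < δ ∧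
        ∀ y : X, ε ≤ ‖y‖ → φ 1 + δ ≤ ∫ ω, φ ‖x + r ω • y‖ ∂P) :=
  stmt11_general P r hmeas hsymm hnorm φ hφ hφm x hx
end

section
/- For every 1 < p < ∞ there exists a constant C = C(p) > 0 such that for all real numbers s, t: ( |(s−t)/C|^2 + |(s+t)/2|^2 )^{1/2} ≤ ( (|s|^p + |t|^p)/2 )^{1/p}. -/
/-!
Write `a = T (1 + u)`, `b = T (1 - u)` with `T = (a + b) / 2`. For `1 < p ≤ 2` the bound
`(1 + u) ^ p + (1 - u) ^ p ≥ 2 + p (p - 1) u ^ 2 / 2`, obtained by integrating Bernoulli's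
inequality in `u`, gives `((a + b) / 2) ^ 2 + ε ((a - b) / 2) ^ 2 ≤ M_p(a, b) ^ 2` with
`ε = p (p - 1) / 4`, where `M_p(a, b) = ((a ^ p + b ^ p) / 2) ^ (1 / p)`; for `p ≥ 2` the
quadratic mean is already below `M_p`, so `ε = 1`.
Replacing `s, t` by `|s|, |t|` can only increase the left side when `ε ≤ 1`, and `C = 2 / √ε`.
-/

open Real Set

theorem mul_le_one_add_rpow_sub_one_sub_rpow {r u : ℝ} (hr : 0 ≤ r) (hu₀ : 0 ≤ u)
    (hu₁ : u ≤ 1) :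
    r * u ≤ (1 + u) ^ r - (1 - u) ^ r := by
  rcases le_total r 1 with hr₁ | hr₁
  · have hsub : (1 + -u) ^ r ≤ 1 + r * -u :=
      rpow_one_add_le_one_add_mul_self (by linarith) hr hr₁
    have hadd : 1 ≤ (1 + u) ^ r := one_le_rpow (by linarith) hr
    rw [← sub_eq_add_neg] at hsub
    linarith
  · have hadd : 1 + r * u ≤ (1 + u) ^ r := one_add_mul_self_le_rpow_one_add (by linarith) hr₁
    have hsub : (1 - u) ^ r ≤ 1 := rpow_le_one (by linarith) (by linarith) hr
    linarith

theorem two_add_mul_sq_le_one_add_rpow_add_one_sub_rpow_of_nonneg {p u : ℝ} (hp : 1 ≤ p)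
    (hu₀ : 0 ≤ u) (hu₁ : u ≤ 1) :
    2 + p * (p - 1) / 2 * u ^ 2 ≤ (1 + u) ^ p + (1 - u) ^ p := by
  let F : ℝ → ℝ := fun x ↦ (1 + x) ^ p + (1 - x) ^ p - p * (p - 1) / 2 * x ^ 2
  have hF : ∀ x ∈ Ioo (0 : ℝ) 1, HasDerivAt F
      (p * ((1 + x) ^ (p - 1) - (1 - x) ^ (p - 1) - (p - 1) * x)) x := by
    intro x hx
    have hplus := ((hasDerivAt_id x).const_add 1).rpow_const (p := p)
      (Or.inl (by linarith [hx.1] : 0 < 1 + x).ne')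
    have hminus := ((hasDerivAt_id x).const_sub 1).rpow_const (p := p)
      (Or.inl (by linarith [hx.2] : 0 < 1 - x).ne')
    refine ((hplus.add hminus).sub
      ((hasDerivAt_pow 2 x).const_mul (p * (p - 1) / 2))).congr_deriv ?_
    simp only [id, Nat.cast_ofNat]
    ring
  have hmono : MonotoneOn F (Icc 0 1) := by
    refine monotoneOn_of_hasDerivWithinAt_nonneg (convex_Icc 0 1) ?_
      (fun x hx ↦ (hF x (by simpa using hx)).hasDerivWithinAt) fun x hx ↦ ?_
    · refine ContinuousOn.sub (ContinuousOn.add ?_ ?_) (by fun_prop) <;>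
        exact ContinuousOn.rpow_const (by fun_prop) fun _ _ ↦ Or.inr (by linarith)
    · rw [interior_Icc] at hx
      have hbern := mul_le_one_add_rpow_sub_one_sub_rpow (sub_nonneg.2 hp) hx.1.le hx.2.le
      exact mul_nonneg (by linarith) (by linarith)
  have hF_le := hmono ⟨le_rfl, zero_le_one⟩ ⟨hu₀, hu₁⟩ hu₀
  simp only [F] at hF_le
  norm_num at hF_le
  linarith

theorem two_add_mul_sq_le_one_add_rpow_add_one_sub_rpow {p u : ℝ} (hp : 1 ≤ p)
    (hu : |u| ≤ 1) :
    2 + p * (p - 1) / 2 * u ^ 2 ≤ (1 + u) ^ p + (1 - u) ^ p := by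
  rcases le_total 0 u with hu₀ | hu₀
  · exact two_add_mul_sq_le_one_add_rpow_add_one_sub_rpow_of_nonneg hp hu₀ (le_of_abs_le hu)
  · have hneg := two_add_mul_sq_le_one_add_rpow_add_one_sub_rpow_of_nonneg hp (neg_nonneg.2 hu₀)
      ((neg_le_abs u).trans hu)
    rwa [neg_sq, sub_neg_eq_add, ← sub_eq_add_neg, add_comm ((1 - u) ^ p)] at hneg

theorem add_sq_add_mul_sub_sq_le_rpow_mean {p a b : ℝ} (hp : 1 ≤ p) (hp₂ : p ≤ 2)
    (ha : 0 ≤ a) (hb : 0 ≤ b) :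
    ((a + b) / 2) ^ 2 + p * (p - 1) / 4 * ((a - b) / 2) ^ 2
      ≤ ((a ^ p + b ^ p) / 2) ^ (2 / p) := by
  rcases (add_nonneg ha hb).eq_or_lt with hab | hab
  · obtain ⟨rfl, rfl⟩ : a = 0 ∧ b = 0 := ⟨by linarith, by linarith⟩
    norm_num
    positivity
  set T := (a + b) / 2
  set u := (a - b) / (a + b)
  set c := p * (p - 1) / 4
  have hT : 0 < T := by positivity
  have hu : |u| ≤ 1 := by
    rw [abs_div, abs_of_pos hab, div_le_one hab]
    exact abs_sub_le_iff.2 ⟨by linarith, by linarith⟩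
  have ha' : a = T * (1 + u) := by simp only [T, u]; field_simp; ring
  have hb' : b = T * (1 - u) := by simp only [T, u]; field_simp; ring
  have hmean : T ^ p * (1 + c * u ^ 2) ≤ (a ^ p + b ^ p) / 2 := by
    have hquad := two_add_mul_sq_le_one_add_rpow_add_one_sub_rpow hp hu
    rw [ha', hb', mul_rpow hT.le (by linarith [neg_abs_le u]),
      mul_rpow hT.le (by linarith [le_abs_self u])]
    calc T ^ p * (1 + c * u ^ 2) ≤ T ^ p * (((1 + u) ^ p + (1 - u) ^ p) / 2) := by
          gcongr
          simp only [c]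
          linarith
      _ = _ := by ring
  have hc : 1 ≤ 1 + c * u ^ 2 :=
    le_add_of_nonneg_right (mul_nonneg (div_nonneg (by nlinarith) zero_le_four) (sq_nonneg u))
  calc ((a + b) / 2) ^ 2 + c * ((a - b) / 2) ^ 2
      = T ^ 2 * (1 + c * u ^ 2) := by simp only [T, u]; field_simp
    _ ≤ T ^ 2 * (1 + c * u ^ 2) ^ (2 / p) := by
      gcongr
      simpa using rpow_le_rpow_of_exponent_le hc ((one_le_div (by linarith)).2 hp₂)
    _ = (T ^ p * (1 + c * u ^ 2)) ^ (2 / p) := by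
      rw [mul_rpow (by positivity) (by positivity), ← rpow_mul hT.le,
        mul_div_cancel₀ _ (by linarith)]
      norm_cast
    _ ≤ ((a ^ p + b ^ p) / 2) ^ (2 / p) := by gcongr

theorem sq_mean_le_rpow_mean {p a b : ℝ} (hp : 2 ≤ p) (ha : 0 ≤ a) (hb : 0 ≤ b) :
    (a ^ 2 + b ^ 2) / 2 ≤ ((a ^ p + b ^ p) / 2) ^ (2 / p) := by
  have hsq : ∀ x : ℝ, 0 ≤ x → (x ^ 2) ^ (p / 2) = x ^ p := fun x hx ↦ by
    rw [← rpow_natCast, ← rpow_mul hx]; congr 1; push_cast; ring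
  have hconv : ((a ^ 2 + b ^ 2) / 2) ^ (p / 2) ≤ (a ^ p + b ^ p) / 2 := by
    have := (convexOn_rpow (p := p / 2) (by linarith)).2 (sq_nonneg a) (sq_nonneg b)
      (by norm_num : (0 : ℝ) ≤ 1 / 2) (by norm_num : (0 : ℝ) ≤ 1 / 2) (add_halves 1)
    simp only [smul_eq_mul, hsq a ha, hsq b hb] at this
    calc ((a ^ 2 + b ^ 2) / 2) ^ (p / 2) = (1 / 2 * a ^ 2 + 1 / 2 * b ^ 2) ^ (p / 2) := by
          congr 1; ring
      _ ≤ 1 / 2 * a ^ p + 1 / 2 * b ^ p := this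
      _ = (a ^ p + b ^ p) / 2 := by ring
  calc (a ^ 2 + b ^ 2) / 2 = (((a ^ 2 + b ^ 2) / 2) ^ (p / 2)) ^ (2 / p) := by
        rw [← rpow_mul (by positivity), div_mul_div_cancel₀ two_ne_zero,
          div_self (by positivity), rpow_one]
    _ ≤ ((a ^ p + b ^ p) / 2) ^ (2 / p) := by gcongr

theorem exists_add_sq_add_mul_sub_sq_le_rpow_mean {p : ℝ} (hp : 1 < p) :
    ∃ ε, 0 < ε ∧ ε ≤ 1 ∧ ∀ a b : ℝ, 0 ≤ a → 0 ≤ b →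
      ((a + b) / 2) ^ 2 + ε * ((a - b) / 2) ^ 2 ≤ ((a ^ p + b ^ p) / 2) ^ (2 / p) := by
  rcases le_total p 2 with hp₂ | hp₂
  · exact ⟨p * (p - 1) / 4, by nlinarith, by nlinarith,
      fun a b ha hb ↦ add_sq_add_mul_sub_sq_le_rpow_mean hp.le hp₂ ha hb⟩
  · refine ⟨1, one_pos, le_rfl, fun a b ha hb ↦ ?_⟩
    calc ((a + b) / 2) ^ 2 + 1 * ((a - b) / 2) ^ 2 = (a ^ 2 + b ^ 2) / 2 := by ring
      _ ≤ ((a ^ p + b ^ p) / 2) ^ (2 / p) := sq_mean_le_rpow_mean hp₂ ha hb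

theorem add_sq_add_mul_sub_sq_le_abs {ε : ℝ} (hε : ε ≤ 1) (s t : ℝ) :
    ((s + t) / 2) ^ 2 + ε * ((s - t) / 2) ^ 2
      ≤ ((|s| + |t|) / 2) ^ 2 + ε * ((|s| - |t|) / 2) ^ 2 := by
  have h : (s + t) ^ 2 ≤ (|s| + |t|) ^ 2 := by
    rw [← sq_abs (s + t)]
    exact pow_le_pow_left₀ (abs_nonneg _) (abs_add_le s t) 2
  nlinarith [sq_abs s, sq_abs t, mul_le_mul_of_nonneg_left h (sub_nonneg.2 hε)]

theorem stmt15 (p : ℝ) (hp : 1 < p) :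
    ∃ C : ℝ, 0 < C ∧ ∀ s t : ℝ,
      Real.sqrt (((s - t) / C) ^ 2 + ((s + t) / 2) ^ 2)
        ≤ ((|s| ^ p + |t| ^ p) / 2) ^ (1 / p) := by
  obtain ⟨ε, hε₀, hε₁, hε⟩ := exists_add_sq_add_mul_sub_sq_le_rpow_mean hp
  refine ⟨2 / √ε, by positivity, fun s t ↦ ?_⟩
  rw [sqrt_le_left (by positivity), ← rpow_mul_natCast (by positivity)]
  calc ((s - t) / (2 / √ε)) ^ 2 + ((s + t) / 2) ^ 2
      = ((s + t) / 2) ^ 2 + ε * ((s - t) / 2) ^ 2 := by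
        rw [div_div_eq_mul_div, div_pow, mul_pow, sq_sqrt hε₀.le]; ring
    _ ≤ ((|s| + |t|) / 2) ^ 2 + ε * ((|s| - |t|) / 2) ^ 2 :=
        add_sq_add_mul_sub_sq_le_abs hε₁ s t
    _ ≤ ((|s| ^ p + |t| ^ p) / 2) ^ (2 / p) := hε _ _ (abs_nonneg s) (abs_nonneg t)
    _ = ((|s| ^ p + |t| ^ p) / 2) ^ (1 / p * (2 : ℕ)) := by
        rw [one_div_mul_eq_div, Nat.cast_ofNat]
end

section
/- Every uniformly convex Banach lattice is uniformly monotone. -/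
/-!
Apply uniform convexity to `|x|`, which has the same norm as `x`, and to `y`. Both `|x| + y` and
`|x| - y` have modulus at most `|x| + |y|`, so by solidity of the norm neither of their norms
exceeds `‖|x| + |y|‖`.
-/

section SolidNorm

variable {α : Type*} [NormedAddCommGroup α] [Lattice α] [HasSolidNorm α] [AddLeftMono α]

theorem norm_add_le_norm_abs_add_abs (a b : α) : ‖a + b‖ ≤ ‖|a| + |b|‖ :=
  norm_le_norm_of_abs_le_abs <| by
    rw [abs_of_nonneg (add_nonneg (abs_nonneg a) (abs_nonneg b))]
    exact abs_add_le a b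

theorem norm_sub_le_norm_abs_add_abs (a b : α) : ‖a - b‖ ≤ ‖|a| + |b|‖ := by
  simpa only [sub_eq_add_neg, abs_neg] using norm_add_le_norm_abs_add_abs a (-b)

end SolidNorm

theorem stmt17_general {E : Type*} [NormedAddCommGroup E] [Lattice E] [HasSolidNorm E]
    [IsOrderedAddMonoid E]
    (huc : ∀ ε : ℝ, 0 < ε → ∃ δ : ℝ, 0 < δ ∧
      ∀ x y : E, ‖x‖ = 1 → ε ≤ ‖y‖ → 1 + δ ≤ max ‖x + y‖ ‖x - y‖) :
    ∀ ε : ℝ, 0 < ε → ∃ δ : ℝ, 0 < δ ∧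
      ∀ x y : E, ‖x‖ = 1 → ε ≤ ‖y‖ → 1 + δ ≤ ‖|x| + |y|‖ := by
  intro ε hε
  obtain ⟨δ, hδ, hconvex⟩ := huc ε hε
  refine ⟨δ, hδ, fun x y hx hy => ?_⟩
  have hsum := norm_add_le_norm_abs_add_abs |x| y
  have hdiff := norm_sub_le_norm_abs_add_abs |x| y
  rw [abs_abs] at hsum hdiff
  exact (hconvex |x| y ((norm_abs_eq_norm x).trans hx) hy).trans (max_le hsum hdiff)

theorem stmt17 {E : Type*} [NormedAddCommGroup E] [Lattice E] [HasSolidNorm E]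
    [IsOrderedAddMonoid E] [NormedSpace ℝ E]
    [CompleteSpace E]
    (huc : ∀ ε : ℝ, 0 < ε → ∃ δ : ℝ, 0 < δ ∧
      ∀ x y : E, ‖x‖ = 1 → ε ≤ ‖y‖ → 1 + δ ≤ max ‖x + y‖ ‖x - y‖) :
    ∀ ε : ℝ, 0 < ε → ∃ δ : ℝ, 0 < δ ∧
      ∀ x y : E, ‖x‖ = 1 → ε ≤ ‖y‖ → 1 + δ ≤ ‖|x| + |y|‖ :=
  stmt17_general huc
end
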